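/- arXiv:2406.10075 — 6 statements merged into one kernel-verified Lean document; each statement's English description precedes it below -/
import Mathlib

section
/- Let F₁, F₂: [0,∞) → [0,∞) be C² convex with F_j(0) = F_j'(0) = 0, and let h: [0,∞)² → ℝ be C² with h and its first partial derivatives vanishing on the boundary of the nonnegative quadrant. Assume |∂_{r_i}∂_{r_j} h(r₁,r₂)| ≤ κ_{j,i} F_i''(r_i) for all (r₁,r₂) in the nonnegative quadrant and all i,j ∈ {1,2}, with constants κ_{j,i} > 0. Then there exists ε₀ > 0 such that for every 0 < ε ≤ ε₀ the function (r₁,r₂) ↦ F₁(r₁) + F₂(r₂) + 2ε h(r₁,r₂) is convex on the nonnegative quadrant, and strictly convex if ε < ε₀ and F₁'', F₂'' are strictly positive on (0,∞). -/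
/-!
The Hessian of `F₁(r₁) + F₂(r₂) + 2εh` is `diag(F₁'', F₂'') + 2ε ∇²h`. Since the mixed partials
of `h` agree, each of them is bounded both by `κ₂₁ F₁''` and by `κ₁₂ F₂''`, so `2v₁v₂ ≥ -v₁² - v₂²`
bounds the cross term and the whole Hessian dominates `(1 - 2εK) diag(F₁'', F₂'')`, where
`K = κ₁₁ + κ₁₂ + κ₂₁ + κ₂₂`. Hence it is positive semidefinite for `ε ≤ ε₀ = 1/(2K)`, which gives
convexity on the open quadrant, and convexity passes to the closed quadrant by continuity.
For `ε < ε₀` the function is `2εK` times the one for `ε₀` plus `1 - 2εK > 0` times the strictly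
convex `F₁(r₁) + F₂(r₂)`.
-/

open Set Filter Topology ContinuousLinearMap

theorem hasFDerivAt_uncurry_of_hasDerivAt {k k₁ k₂ : ℝ → ℝ → ℝ} {p : ℝ × ℝ}
    (hk₁ : ∀ᶠ q in 𝓝 p, HasDerivAt (k · q.2) (k₁ q.1 q.2) q.1)
    (hk₂ : ∀ᶠ q in 𝓝 p, HasDerivAt (k q.1 ·) (k₂ q.1 q.2) q.2)
    (hk₁c : ContinuousAt ↿k₁ p) (hk₂c : ContinuousAt ↿k₂ p) :
    HasFDerivAt ↿k (k₁ p.1 p.2 • fst ℝ ℝ ℝ + k₂ p.1 p.2 • snd ℝ ℝ ℝ) p := by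
  have hsmul : Continuous fun c : ℝ => smulRight (1 : ℝ →L[ℝ] ℝ) c :=
    (smulRightL ℝ ℝ ℝ 1).continuous
  have := hasStrictFDerivAt_uncurry_coprod
    (f₁ := fun x y => smulRight (1 : ℝ →L[ℝ] ℝ) (k₁ x y))
    (f₂ := fun x y => smulRight (1 : ℝ →L[ℝ] ℝ) (k₂ x y))
    (hk₁.mono fun q hq => hq.hasFDerivAt) (hk₂.mono fun q hq => hq.hasFDerivAt)
    (hsmul.continuousAt.comp hk₁c) (hsmul.continuousAt.comp hk₂c)
  refine this.hasFDerivAt.congr_fderiv ?_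
  ext <;> simp [Function.HasUncurry.uncurry]

theorem hasFDerivAt_uncurry_of_quadrant {k k₁ k₂ : ℝ → ℝ → ℝ}
    (hk₁ : ∀ r₁ ≥ (0:ℝ), ∀ r₂ ≥ (0:ℝ), HasDerivAt (fun t => k t r₂) (k₁ r₁ r₂) r₁)
    (hk₂ : ∀ r₁ ≥ (0:ℝ), ∀ r₂ ≥ (0:ℝ), HasDerivAt (fun t => k r₁ t) (k₂ r₁ r₂) r₂)
    (hk₁c : ContinuousOn ↿k₁ (Ici 0 ×ˢ Ici 0)) (hk₂c : ContinuousOn ↿k₂ (Ici 0 ×ˢ Ici 0))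
    {p : ℝ × ℝ} (hp : p ∈ Ioi 0 ×ˢ Ioi 0) :
    HasFDerivAt ↿k (k₁ p.1 p.2 • fst ℝ ℝ ℝ + k₂ p.1 p.2 • snd ℝ ℝ ℝ) p := by
  have hQ : Ici (0:ℝ) ×ˢ Ici (0:ℝ) ∈ 𝓝 p :=
    mem_of_superset ((isOpen_Ioi.prod isOpen_Ioi).mem_nhds hp)
      (prod_mono Ioi_subset_Ici_self Ioi_subset_Ici_self)
  exact hasFDerivAt_uncurry_of_hasDerivAt
    (eventually_of_mem hQ fun q hq => hk₁ q.1 hq.1 q.2 hq.2)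
    (eventually_of_mem hQ fun q hq => hk₂ q.1 hq.1 q.2 hq.2)
    (hk₁c.continuousAt hQ) (hk₂c.continuousAt hQ)

theorem partialDeriv_comm {k k₁ k₂ : ℝ → ℝ → ℝ} {p : ℝ × ℝ} {L₁ L₂ : ℝ × ℝ →L[ℝ] ℝ}
    (hk : ∀ᶠ q in 𝓝 p, HasFDerivAt ↿k (k₁ q.1 q.2 • fst ℝ ℝ ℝ + k₂ q.1 q.2 • snd ℝ ℝ ℝ) q)
    (hk₁ : HasFDerivAt ↿k₁ L₁ p) (hk₂ : HasFDerivAt ↿k₂ L₂ p) : L₁ (0, 1) = L₂ (1, 0) := by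
  have := second_derivative_symmetric_of_eventually hk
    ((hk₁.smul_const (fst ℝ ℝ ℝ)).add (hk₂.smul_const (snd ℝ ℝ ℝ))) (0, 1) (1, 0)
  simpa using this

theorem convexOn_of_hasFDerivAt2_nonneg' {E : Type*} [NormedAddCommGroup E] [NormedSpace ℝ E]
    {s : Set E} {f : E → ℝ} {f' : E → StrongDual ℝ E} {f'' : E → E →L[ℝ] StrongDual ℝ E}
    (hs : Convex ℝ s) (hf : ∀ x ∈ s, HasFDerivAt f (f' x) x)
    (hf' : ∀ x ∈ s, HasFDerivAt f' (f'' x) x) (hf'' : ∀ x ∈ s, ∀ u, 0 ≤ f'' x u u) :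
    ConvexOn ℝ s f := by
  refine ⟨hs, fun x hx y hy a b ha hb hab => ?_⟩
  set γ : ℝ → E := fun t => x + t • (y - x)
  have hγs : ∀ t ∈ Icc (0:ℝ) 1, γ t ∈ s := fun t ht => hs.add_smul_sub_mem hx hy ht
  have hγ : ∀ t, HasDerivAt γ (y - x) t := fun t => by
    have := ((hasDerivAt_id t).smul_const (y - x)).const_add x
    rwa [one_smul] at this
  have hg : ConvexOn ℝ (Icc 0 1) (f ∘ γ) := by
    refine convexOn_of_hasDerivWithinAt2_nonneg (convex_Icc 0 1)
      (f' := fun t => f' (γ t) (y - x)) (f'' := fun t => f'' (γ t) (y - x) (y - x))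
      (fun t ht => ((hf _ (hγs t ht)).continuousAt.comp (hγ t).continuousAt).continuousWithinAt)
      (fun t ht => ?_) (fun t ht => ?_) (fun t ht => hf'' _ (hγs t (interior_subset ht)) _)
    · exact ((hf _ (hγs t (interior_subset ht))).comp_hasDerivAt t (hγ t)).hasDerivWithinAt
    · exact (((apply ℝ ℝ (y - x)).hasFDerivAt.comp_hasDerivAt t
        ((hf' _ (hγs t (interior_subset ht))).comp_hasDerivAt t (hγ t)))).hasDerivWithinAt
  have := hg.2 (left_mem_Icc.2 zero_le_one) (right_mem_Icc.2 zero_le_one) ha hb hab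
  have hab' : a • x + b • y = γ b := by
    obtain rfl : a = 1 - b := eq_sub_of_add_eq hab
    simp only [γ, sub_smul, one_smul, smul_sub]; abel
  simpa [γ, hab'] using this

theorem ConvexOn.of_interior {E : Type*} [NormedAddCommGroup E] [NormedSpace ℝ E]
    {s : Set E} {f : E → ℝ} (hs : Convex ℝ s) (hs' : (interior s).Nonempty)
    (hf : ConvexOn ℝ (interior s) f) (hfc : ContinuousOn f s) : ConvexOn ℝ s f := by
  refine ⟨hs, fun x hx y hy a b ha hb hab => ?_⟩
  -- the convexity defect `Φ` is nonnegative on pairs of interior points, which are dense in `s × s`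
  set Φ : E × E → ℝ := fun q => a * f q.1 + b * f q.2 - f (a • q.1 + b • q.2)
  have hΦ : ContinuousOn Φ (s ×ˢ s) := by
    have h₁ : ContinuousOn (fun q : E × E => f q.1) (s ×ˢ s) :=
      hfc.comp continuousOn_fst fun _ hq => hq.1
    have h₂ : ContinuousOn (fun q : E × E => f q.2) (s ×ˢ s) :=
      hfc.comp continuousOn_snd fun _ hq => hq.2
    have h₃ : ContinuousOn (fun q : E × E => f (a • q.1 + b • q.2)) (s ×ˢ s) :=
      hfc.comp (by fun_prop) fun _ hq => hs (mem_prod.1 hq).1 (mem_prod.1 hq).2 ha hb hab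
    exact ((continuousOn_const.mul h₁).add (continuousOn_const.mul h₂)).sub h₃
  have hxy : (x, y) ∈ closure (interior s ×ˢ interior s) := by
    rw [closure_prod_eq, hs.closure_interior_eq_closure_of_nonempty_interior hs']
    exact ⟨subset_closure hx, subset_closure hy⟩
  have hmem := ((hΦ (x, y) ⟨hx, hy⟩).mono
    (prod_mono interior_subset interior_subset)).mem_closure_image hxy
  have himage : Φ '' (interior s ×ˢ interior s) ⊆ Ici 0 := by
    rintro _ ⟨q, hq, rfl⟩
    exact sub_nonneg.2 (hf.2 hq.1 hq.2 ha hb hab)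
  exact sub_nonneg.1 (closure_minimal himage isClosed_Ici hmem)

theorem convexOn_of_hasFDerivAt2_nonneg {E : Type*} [NormedAddCommGroup E] [NormedSpace ℝ E]
    {s : Set E} {f : E → ℝ} {f' : E → StrongDual ℝ E} {f'' : E → E →L[ℝ] StrongDual ℝ E}
    (hs : Convex ℝ s) (hs' : (interior s).Nonempty) (hfc : ContinuousOn f s)
    (hf : ∀ x ∈ interior s, HasFDerivAt f (f' x) x)
    (hf' : ∀ x ∈ interior s, HasFDerivAt f' (f'' x) x)
    (hf'' : ∀ x ∈ interior s, ∀ u, 0 ≤ f'' x u u) : ConvexOn ℝ s f :=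
  (convexOn_of_hasFDerivAt2_nonneg' hs.interior hf hf' hf'').of_interior hs hs' hfc

theorem strictConvexOn_Ici_of_hasDerivAt2_pos {a : ℝ} {f f' f'' : ℝ → ℝ}
    (hf : ∀ x ≥ a, HasDerivAt f (f' x) x) (hf' : ∀ x ≥ a, HasDerivAt f' (f'' x) x)
    (hf'' : ∀ x > a, 0 < f'' x) : StrictConvexOn ℝ (Ici a) f := by
  refine strictConvexOn_of_deriv2_pos (convex_Ici a)
    (fun x hx => (hf x hx).continuousAt.continuousWithinAt) fun x hx => ?_
  rw [interior_Ici] at hx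
  have hderiv : deriv f =ᶠ[𝓝 x] f' :=
    eventually_of_mem (Ioi_mem_nhds hx) fun y hy => (hf y (le_of_lt hy)).deriv
  rw [Function.iterate_succ_apply, Function.iterate_one, hderiv.deriv_eq, (hf' x hx.le).deriv]
  exact hf'' x hx

theorem StrictConvexOn.prod_add {E F : Type*} [AddCommGroup E] [Module ℝ E] [AddCommGroup F]
    [Module ℝ F] {s : Set E} {t : Set F} {f : E → ℝ} {g : F → ℝ}
    (hf : StrictConvexOn ℝ s f) (hg : StrictConvexOn ℝ t g) :
    StrictConvexOn ℝ (s ×ˢ t) fun p => f p.1 + g p.2 := by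
  refine ⟨hf.1.prod hg.1, fun x hx y hy hxy a b ha hb hab => ?_⟩
  simp only [Prod.fst_add, Prod.snd_add, Prod.smul_fst, Prod.smul_snd, smul_eq_mul]
  rcases ne_or_eq x.1 y.1 with h₁ | h₁
  · have := hf.2 hx.1 hy.1 h₁ ha hb hab
    have := hg.convexOn.2 hx.2 hy.2 ha.le hb.le hab
    simp only [smul_eq_mul] at *
    linarith
  · have h₂ : x.2 ≠ y.2 := fun h₂ => hxy (Prod.ext h₁ h₂)
    have := hf.convexOn.2 hx.1 hy.1 ha.le hb.le hab
    have := hg.2 hx.2 hy.2 h₂ ha hb hab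
    simp only [smul_eq_mul] at *
    linarith

theorem StrictConvexOn.const_mul {E : Type*} [AddCommGroup E] [Module ℝ E] {s : Set E}
    {f : E → ℝ} {c : ℝ} (hc : 0 < c) (hf : StrictConvexOn ℝ s f) :
    StrictConvexOn ℝ s fun x => c * f x :=
  ⟨hf.1, fun x hx y hy hxy a b ha hb hab => by
    have := mul_lt_mul_of_pos_left (hf.2 hx hy hxy ha hb hab) hc
    simp only [smul_eq_mul] at this ⊢
    linear_combination this⟩

theorem perturbed_quadratic_form_nonneg {A B H₁₁ H₁₂ H₂₂ κ₁₁ κ₁₂ κ₂₁ κ₂₂ c : ℝ} (u₁ u₂ : ℝ)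
    (hc : 0 ≤ c) (hcA : c * (κ₁₁ + κ₂₁) ≤ 1) (hcB : c * (κ₁₂ + κ₂₂) ≤ 1) (hA : 0 ≤ A) (hB : 0 ≤ B)
    (h₁₁ : |H₁₁| ≤ κ₁₁ * A) (h₂₁ : |H₁₂| ≤ κ₂₁ * A) (h₁₂ : |H₁₂| ≤ κ₁₂ * B)
    (h₂₂ : |H₂₂| ≤ κ₂₂ * B) :
    0 ≤ A * u₁ ^ 2 + B * u₂ ^ 2 + c * (H₁₁ * u₁ ^ 2 + 2 * H₁₂ * u₁ * u₂ + H₂₂ * u₂ ^ 2) := by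
  have hcross : -(|H₁₂| * (u₁ ^ 2 + u₂ ^ 2)) ≤ 2 * H₁₂ * u₁ * u₂ := by
    have := two_mul_le_add_sq |u₁| |u₂|
    rw [sq_abs, sq_abs] at this
    have := neg_abs_le (H₁₂ * (u₁ * u₂))
    rw [abs_mul, abs_mul] at this
    nlinarith [abs_nonneg H₁₂]
  have hform : -((κ₁₁ + κ₂₁) * A * u₁ ^ 2 + (κ₁₂ + κ₂₂) * B * u₂ ^ 2) ≤
      H₁₁ * u₁ ^ 2 + 2 * H₁₂ * u₁ * u₂ + H₂₂ * u₂ ^ 2 := by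
    have := neg_abs_le H₁₁
    have := neg_abs_le H₂₂
    nlinarith [sq_nonneg u₁, sq_nonneg u₂]
  nlinarith [mul_le_mul_of_nonneg_left hform hc,
    mul_nonneg (sub_nonneg.2 hcA) (mul_nonneg hA (sq_nonneg u₁)),
    mul_nonneg (sub_nonneg.2 hcB) (mul_nonneg hB (sq_nonneg u₂))]

theorem convexOn_separable_add_mul {F₁ F₂ F₁' F₂' F₁'' F₂'' : ℝ → ℝ}
    {k k₁ k₂ k₁₁ k₁₂ k₂₁ k₂₂ : ℝ → ℝ → ℝ} {κ₁₁ κ₁₂ κ₂₁ κ₂₂ c : ℝ}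
    (hF₁ : ∀ r ≥ (0:ℝ), HasDerivAt F₁ (F₁' r) r) (hF₁' : ∀ r ≥ (0:ℝ), HasDerivAt F₁' (F₁'' r) r)
    (hF₂ : ∀ r ≥ (0:ℝ), HasDerivAt F₂ (F₂' r) r) (hF₂' : ∀ r ≥ (0:ℝ), HasDerivAt F₂' (F₂'' r) r)
    (hF₁'' : ∀ r ≥ (0:ℝ), 0 ≤ F₁'' r) (hF₂'' : ∀ r ≥ (0:ℝ), 0 ≤ F₂'' r)
    (hk : ContinuousOn ↿k (Ici 0 ×ˢ Ici 0))
    (hDk : ∀ p ∈ Ioi (0:ℝ) ×ˢ Ioi (0:ℝ),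
      HasFDerivAt ↿k (k₁ p.1 p.2 • fst ℝ ℝ ℝ + k₂ p.1 p.2 • snd ℝ ℝ ℝ) p)
    (hDk₁ : ∀ p ∈ Ioi (0:ℝ) ×ˢ Ioi (0:ℝ),
      HasFDerivAt ↿k₁ (k₁₁ p.1 p.2 • fst ℝ ℝ ℝ + k₁₂ p.1 p.2 • snd ℝ ℝ ℝ) p)
    (hDk₂ : ∀ p ∈ Ioi (0:ℝ) ×ˢ Ioi (0:ℝ),
      HasFDerivAt ↿k₂ (k₂₁ p.1 p.2 • fst ℝ ℝ ℝ + k₂₂ p.1 p.2 • snd ℝ ℝ ℝ) p)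
    (hbd₁₁ : ∀ r₁ ≥ (0:ℝ), ∀ r₂ ≥ (0:ℝ), |k₁₁ r₁ r₂| ≤ κ₁₁ * F₁'' r₁)
    (hbd₂₁ : ∀ r₁ ≥ (0:ℝ), ∀ r₂ ≥ (0:ℝ), |k₂₁ r₁ r₂| ≤ κ₂₁ * F₁'' r₁)
    (hbd₁₂ : ∀ r₁ ≥ (0:ℝ), ∀ r₂ ≥ (0:ℝ), |k₁₂ r₁ r₂| ≤ κ₁₂ * F₂'' r₂)
    (hbd₂₂ : ∀ r₁ ≥ (0:ℝ), ∀ r₂ ≥ (0:ℝ), |k₂₂ r₁ r₂| ≤ κ₂₂ * F₂'' r₂)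
    (hc : 0 ≤ c) (hc₁ : c * (κ₁₁ + κ₂₁) ≤ 1) (hc₂ : c * (κ₁₂ + κ₂₂) ≤ 1) :
    ConvexOn ℝ (Ici 0 ×ˢ Ici 0) fun p : ℝ × ℝ => F₁ p.1 + F₂ p.2 + c * k p.1 p.2 := by
  have hint : interior (Ici (0:ℝ) ×ˢ Ici (0:ℝ)) = Ioi 0 ×ˢ Ioi 0 := by
    rw [interior_prod_eq, interior_Ici]
  have hFc : ∀ {F F' : ℝ → ℝ}, (∀ r ≥ (0:ℝ), HasDerivAt F (F' r) r) → ContinuousOn F (Ici 0) :=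
    fun hF r hr => (hF r hr).continuousAt.continuousWithinAt
  refine convexOn_of_hasFDerivAt2_nonneg ((convex_Ici 0).prod (convex_Ici 0))
    ⟨(1, 1), by rw [hint]; norm_num⟩
    -- the Hessian `f''` is read off from the derivative of the gradient `f'` built below
    (((hFc hF₁).comp continuousOn_fst fun _ hp => hp.1).add
      ((hFc hF₂).comp continuousOn_snd fun _ hp => hp.2) |>.add (continuousOn_const.mul hk))
    (f' := fun p => F₁' p.1 • fst ℝ ℝ ℝ + F₂' p.2 • snd ℝ ℝ ℝ +
      c • (k₁ p.1 p.2 • fst ℝ ℝ ℝ + k₂ p.1 p.2 • snd ℝ ℝ ℝ))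
    (fun p hp => (((hF₁ _ (le_of_lt (hint ▸ hp).1)).comp_hasFDerivAt p hasFDerivAt_fst).add
      ((hF₂ _ (le_of_lt (hint ▸ hp).2)).comp_hasFDerivAt p hasFDerivAt_snd)).add
      ((hDk p (hint ▸ hp)).const_mul c))
    (fun p hp => ((((hF₁' _ (le_of_lt (hint ▸ hp).1)).comp_hasFDerivAt p hasFDerivAt_fst).smul_const
        (fst ℝ ℝ ℝ)).add
      (((hF₂' _ (le_of_lt (hint ▸ hp).2)).comp_hasFDerivAt p hasFDerivAt_snd).smul_const
        (snd ℝ ℝ ℝ))).add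
      ((((hDk₁ p (hint ▸ hp)).smul_const (fst ℝ ℝ ℝ)).add
        ((hDk₂ p (hint ▸ hp)).smul_const (snd ℝ ℝ ℝ))).const_smul c))
    (fun p hp u => ?_)
  rw [hint] at hp
  have hsymm : k₁₂ p.1 p.2 = k₂₁ p.1 p.2 := by
    simpa using partialDeriv_comm
      (eventually_of_mem ((isOpen_Ioi.prod isOpen_Ioi).mem_nhds hp) hDk) (hDk₁ p hp) (hDk₂ p hp)
  obtain ⟨hp₁, hp₂⟩ := hp
  have := perturbed_quadratic_form_nonneg u.1 u.2 hc hc₁ hc₂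
    (hF₁'' _ (le_of_lt hp₁)) (hF₂'' _ (le_of_lt hp₂)) (hbd₁₁ _ (le_of_lt hp₁) _ (le_of_lt hp₂))
    (hsymm ▸ hbd₂₁ _ (le_of_lt hp₁) _ (le_of_lt hp₂))
    (hbd₁₂ _ (le_of_lt hp₁) _ (le_of_lt hp₂)) (hbd₂₂ _ (le_of_lt hp₁) _ (le_of_lt hp₂))
  simp only [smul_add, add_apply, smulRight_apply, smul_apply, coe_fst', smul_eq_mul, coe_snd']
  rw [← hsymm]
  linarith

theorem stmt2_general (F₁ F₂ F₁' F₂' F₁'' F₂'' : ℝ → ℝ)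
    (h h₁ h₂ h₁₁ h₁₂ h₂₁ h₂₂ : ℝ → ℝ → ℝ)
    (κ₁₁ κ₁₂ κ₂₁ κ₂₂ : ℝ)
    (hκ₁₁ : 0 < κ₁₁) (hκ₁₂ : 0 < κ₁₂) (hκ₂₁ : 0 < κ₂₁) (hκ₂₂ : 0 < κ₂₂)
    (hF₁d : ∀ r ≥ (0:ℝ), HasDerivAt F₁ (F₁' r) r)
    (hF₁'d : ∀ r ≥ (0:ℝ), HasDerivAt F₁' (F₁'' r) r)
    (hF₂d : ∀ r ≥ (0:ℝ), HasDerivAt F₂ (F₂' r) r)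
    (hF₂'d : ∀ r ≥ (0:ℝ), HasDerivAt F₂' (F₂'' r) r)
    (hF₁''nn : ∀ r ≥ (0:ℝ), 0 ≤ F₁'' r) (hF₂''nn : ∀ r ≥ (0:ℝ), 0 ≤ F₂'' r)
    -- first partial derivatives of h on the quadrant
    (hh₁ : ∀ r₁ ≥ (0:ℝ), ∀ r₂ ≥ (0:ℝ), HasDerivAt (fun t => h t r₂) (h₁ r₁ r₂) r₁)
    (hh₂ : ∀ r₁ ≥ (0:ℝ), ∀ r₂ ≥ (0:ℝ), HasDerivAt (fun t => h r₁ t) (h₂ r₁ r₂) r₂)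
    -- second partial derivatives of h on the quadrant
    (hh₁₁ : ∀ r₁ ≥ (0:ℝ), ∀ r₂ ≥ (0:ℝ), HasDerivAt (fun t => h₁ t r₂) (h₁₁ r₁ r₂) r₁)
    (hh₁₂ : ∀ r₁ ≥ (0:ℝ), ∀ r₂ ≥ (0:ℝ), HasDerivAt (fun t => h₁ r₁ t) (h₁₂ r₁ r₂) r₂)
    (hh₂₁ : ∀ r₁ ≥ (0:ℝ), ∀ r₂ ≥ (0:ℝ), HasDerivAt (fun t => h₂ t r₂) (h₂₁ r₁ r₂) r₁)
    (hh₂₂ : ∀ r₁ ≥ (0:ℝ), ∀ r₂ ≥ (0:ℝ), HasDerivAt (fun t => h₂ r₁ t) (h₂₂ r₁ r₂) r₂)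
    -- C² regularity: continuity of h and its partial derivatives on the quadrant
    (hhc : ContinuousOn (fun p : ℝ × ℝ => h p.1 p.2) (Set.Ici (0:ℝ) ×ˢ Set.Ici (0:ℝ)))
    (hh₁c : ContinuousOn (fun p : ℝ × ℝ => h₁ p.1 p.2) (Set.Ici (0:ℝ) ×ˢ Set.Ici (0:ℝ)))
    (hh₂c : ContinuousOn (fun p : ℝ × ℝ => h₂ p.1 p.2) (Set.Ici (0:ℝ) ×ˢ Set.Ici (0:ℝ)))
    (hh₁₁c : ContinuousOn (fun p : ℝ × ℝ => h₁₁ p.1 p.2) (Set.Ici (0:ℝ) ×ˢ Set.Ici (0:ℝ)))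
    (hh₁₂c : ContinuousOn (fun p : ℝ × ℝ => h₁₂ p.1 p.2) (Set.Ici (0:ℝ) ×ˢ Set.Ici (0:ℝ)))
    (hh₂₁c : ContinuousOn (fun p : ℝ × ℝ => h₂₁ p.1 p.2) (Set.Ici (0:ℝ) ×ˢ Set.Ici (0:ℝ)))
    (hh₂₂c : ContinuousOn (fun p : ℝ × ℝ => h₂₂ p.1 p.2) (Set.Ici (0:ℝ) ×ˢ Set.Ici (0:ℝ)))
    -- the bounds |∂_{r_i}∂_{r_j} h| ≤ κ_{j,i} F_i''(r_i)
    (hbd₁₁ : ∀ r₁ ≥ (0:ℝ), ∀ r₂ ≥ (0:ℝ), |h₁₁ r₁ r₂| ≤ κ₁₁ * F₁'' r₁)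
    (hbd₂₁ : ∀ r₁ ≥ (0:ℝ), ∀ r₂ ≥ (0:ℝ), |h₂₁ r₁ r₂| ≤ κ₂₁ * F₁'' r₁)
    (hbd₁₂ : ∀ r₁ ≥ (0:ℝ), ∀ r₂ ≥ (0:ℝ), |h₁₂ r₁ r₂| ≤ κ₁₂ * F₂'' r₂)
    (hbd₂₂ : ∀ r₁ ≥ (0:ℝ), ∀ r₂ ≥ (0:ℝ), |h₂₂ r₁ r₂| ≤ κ₂₂ * F₂'' r₂) :
    ∃ ε₀ > (0:ℝ), ∀ ε : ℝ, 0 < ε → ε ≤ ε₀ →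
      ConvexOn ℝ (Set.Ici (0:ℝ) ×ˢ Set.Ici (0:ℝ))
        (fun p : ℝ × ℝ => F₁ p.1 + F₂ p.2 + 2 * ε * h p.1 p.2) ∧
      (ε < ε₀ → (∀ r > (0:ℝ), 0 < F₁'' r) → (∀ r > (0:ℝ), 0 < F₂'' r) →
        StrictConvexOn ℝ (Set.Ici (0:ℝ) ×ˢ Set.Ici (0:ℝ))
          (fun p : ℝ × ℝ => F₁ p.1 + F₂ p.2 + 2 * ε * h p.1 p.2)) := by
  set K := κ₁₁ + κ₁₂ + κ₂₁ + κ₂₂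
  have hK : 0 < K := by positivity
  have hDh := fun p (hp : p ∈ Ioi (0:ℝ) ×ˢ Ioi (0:ℝ)) =>
    hasFDerivAt_uncurry_of_quadrant hh₁ hh₂ hh₁c hh₂c hp
  have hDh₁ := fun p (hp : p ∈ Ioi (0:ℝ) ×ˢ Ioi (0:ℝ)) =>
    hasFDerivAt_uncurry_of_quadrant hh₁₁ hh₁₂ hh₁₁c hh₁₂c hp
  have hDh₂ := fun p (hp : p ∈ Ioi (0:ℝ) ×ˢ Ioi (0:ℝ)) =>
    hasFDerivAt_uncurry_of_quadrant hh₂₁ hh₂₂ hh₂₁c hh₂₂c hp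
  have hconv : ∀ c : ℝ, 0 ≤ c → c * K ≤ 1 →
      ConvexOn ℝ (Ici (0:ℝ) ×ˢ Ici (0:ℝ)) fun p : ℝ × ℝ => F₁ p.1 + F₂ p.2 + c * h p.1 p.2 :=
    fun c hc hcK => convexOn_separable_add_mul hF₁d hF₁'d hF₂d hF₂'d hF₁''nn hF₂''nn hhc
      hDh hDh₁ hDh₂ hbd₁₁ hbd₂₁ hbd₁₂ hbd₂₂ hc (by nlinarith) (by nlinarith)
  refine ⟨1 / (2 * K), by positivity, fun ε hε hεle => ?_⟩
  rw [le_div_iff₀ (by positivity)] at hεle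
  refine ⟨hconv (2 * ε) (by positivity) (by linarith), fun hεlt hF₁pos hF₂pos => ?_⟩
  rw [lt_div_iff₀ (by positivity)] at hεlt
  have := ((hconv (1 / K) (by positivity) (one_div_mul_cancel hK.ne').le).smul
    (by positivity : 0 ≤ 2 * ε * K)).add_strictConvexOn
    (((strictConvexOn_Ici_of_hasDerivAt2_pos hF₁d hF₁'d hF₁pos).prod_add
      (strictConvexOn_Ici_of_hasDerivAt2_pos hF₂d hF₂'d hF₂pos)).const_mul
      (by linarith : 0 < 1 - 2 * ε * K))
  refine this.congr fun p _ => ?_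
  simp only [Pi.add_apply, smul_eq_mul]
  field_simp
  ring

/-- For small enough `ε₀ > 0`, the function `(r₁,r₂) ↦ F₁(r₁) + F₂(r₂) + 2ε h(r₁,r₂)`
is convex on the nonnegative quadrant for every `0 < ε ≤ ε₀`, and strictly convex if
`ε < ε₀` and `F₁'', F₂''` are strictly positive on `(0,∞)`. -/
theorem stmt2 (F₁ F₂ F₁' F₂' F₁'' F₂'' : ℝ → ℝ)
    (h h₁ h₂ h₁₁ h₁₂ h₂₁ h₂₂ : ℝ → ℝ → ℝ)
    (κ₁₁ κ₁₂ κ₂₁ κ₂₂ : ℝ)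
    (hκ₁₁ : 0 < κ₁₁) (hκ₁₂ : 0 < κ₁₂) (hκ₂₁ : 0 < κ₂₁) (hκ₂₂ : 0 < κ₂₂)
    (hF₁0 : F₁ 0 = 0) (hF₁'0 : F₁' 0 = 0) (hF₂0 : F₂ 0 = 0) (hF₂'0 : F₂' 0 = 0)
    (hF₁nn : ∀ r ≥ (0:ℝ), 0 ≤ F₁ r) (hF₂nn : ∀ r ≥ (0:ℝ), 0 ≤ F₂ r)
    (hF₁d : ∀ r ≥ (0:ℝ), HasDerivAt F₁ (F₁' r) r)
    (hF₁'d : ∀ r ≥ (0:ℝ), HasDerivAt F₁' (F₁'' r) r)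
    (hF₂d : ∀ r ≥ (0:ℝ), HasDerivAt F₂ (F₂' r) r)
    (hF₂'d : ∀ r ≥ (0:ℝ), HasDerivAt F₂' (F₂'' r) r)
    (hF₁''c : ContinuousOn F₁'' (Set.Ici (0:ℝ)))
    (hF₂''c : ContinuousOn F₂'' (Set.Ici (0:ℝ)))
    (hF₁''nn : ∀ r ≥ (0:ℝ), 0 ≤ F₁'' r) (hF₂''nn : ∀ r ≥ (0:ℝ), 0 ≤ F₂'' r)
    -- first partial derivatives of h on the quadrant
    (hh₁ : ∀ r₁ ≥ (0:ℝ), ∀ r₂ ≥ (0:ℝ), HasDerivAt (fun t => h t r₂) (h₁ r₁ r₂) r₁)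
    (hh₂ : ∀ r₁ ≥ (0:ℝ), ∀ r₂ ≥ (0:ℝ), HasDerivAt (fun t => h r₁ t) (h₂ r₁ r₂) r₂)
    -- second partial derivatives of h on the quadrant
    (hh₁₁ : ∀ r₁ ≥ (0:ℝ), ∀ r₂ ≥ (0:ℝ), HasDerivAt (fun t => h₁ t r₂) (h₁₁ r₁ r₂) r₁)
    (hh₁₂ : ∀ r₁ ≥ (0:ℝ), ∀ r₂ ≥ (0:ℝ), HasDerivAt (fun t => h₁ r₁ t) (h₁₂ r₁ r₂) r₂)
    (hh₂₁ : ∀ r₁ ≥ (0:ℝ), ∀ r₂ ≥ (0:ℝ), HasDerivAt (fun t => h₂ t r₂) (h₂₁ r₁ r₂) r₁)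
    (hh₂₂ : ∀ r₁ ≥ (0:ℝ), ∀ r₂ ≥ (0:ℝ), HasDerivAt (fun t => h₂ r₁ t) (h₂₂ r₁ r₂) r₂)
    -- C² regularity: continuity of h and its partial derivatives on the quadrant
    (hhc : ContinuousOn (fun p : ℝ × ℝ => h p.1 p.2) (Set.Ici (0:ℝ) ×ˢ Set.Ici (0:ℝ)))
    (hh₁c : ContinuousOn (fun p : ℝ × ℝ => h₁ p.1 p.2) (Set.Ici (0:ℝ) ×ˢ Set.Ici (0:ℝ)))
    (hh₂c : ContinuousOn (fun p : ℝ × ℝ => h₂ p.1 p.2) (Set.Ici (0:ℝ) ×ˢ Set.Ici (0:ℝ)))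
    (hh₁₁c : ContinuousOn (fun p : ℝ × ℝ => h₁₁ p.1 p.2) (Set.Ici (0:ℝ) ×ˢ Set.Ici (0:ℝ)))
    (hh₁₂c : ContinuousOn (fun p : ℝ × ℝ => h₁₂ p.1 p.2) (Set.Ici (0:ℝ) ×ˢ Set.Ici (0:ℝ)))
    (hh₂₁c : ContinuousOn (fun p : ℝ × ℝ => h₂₁ p.1 p.2) (Set.Ici (0:ℝ) ×ˢ Set.Ici (0:ℝ)))
    (hh₂₂c : ContinuousOn (fun p : ℝ × ℝ => h₂₂ p.1 p.2) (Set.Ici (0:ℝ) ×ˢ Set.Ici (0:ℝ)))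
    -- the bounds |∂_{r_i}∂_{r_j} h| ≤ κ_{j,i} F_i''(r_i)
    (hbd₁₁ : ∀ r₁ ≥ (0:ℝ), ∀ r₂ ≥ (0:ℝ), |h₁₁ r₁ r₂| ≤ κ₁₁ * F₁'' r₁)
    (hbd₂₁ : ∀ r₁ ≥ (0:ℝ), ∀ r₂ ≥ (0:ℝ), |h₂₁ r₁ r₂| ≤ κ₂₁ * F₁'' r₁)
    (hbd₁₂ : ∀ r₁ ≥ (0:ℝ), ∀ r₂ ≥ (0:ℝ), |h₁₂ r₁ r₂| ≤ κ₁₂ * F₂'' r₂)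
    (hbd₂₂ : ∀ r₁ ≥ (0:ℝ), ∀ r₂ ≥ (0:ℝ), |h₂₂ r₁ r₂| ≤ κ₂₂ * F₂'' r₂)
    -- h and its first derivatives vanish on the boundary of the quadrant
    (hbdry : ∀ r ≥ (0:ℝ), h r 0 = 0 ∧ h 0 r = 0 ∧ h₁ r 0 = 0 ∧ h₁ 0 r = 0 ∧
      h₂ r 0 = 0 ∧ h₂ 0 r = 0) :
    ∃ ε₀ > (0:ℝ), ∀ ε : ℝ, 0 < ε → ε ≤ ε₀ →
      ConvexOn ℝ (Set.Ici (0:ℝ) ×ˢ Set.Ici (0:ℝ))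
        (fun p : ℝ × ℝ => F₁ p.1 + F₂ p.2 + 2 * ε * h p.1 p.2) ∧
      (ε < ε₀ → (∀ r > (0:ℝ), 0 < F₁'' r) → (∀ r > (0:ℝ), 0 < F₂'' r) →
        StrictConvexOn ℝ (Set.Ici (0:ℝ) ×ˢ Set.Ici (0:ℝ))
          (fun p : ℝ × ℝ => F₁ p.1 + F₂ p.2 + 2 * ε * h p.1 p.2)) :=
  stmt2_general F₁ F₂ F₁' F₂' F₁'' F₂'' h h₁ h₂ h₁₁ h₁₂ h₂₁ h₂₂ κ₁₁ κ₁₂ κ₂₁ κ₂₂ hκ₁₁ hκ₁₂ hκ₂₁ hκ₂₂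
    hF₁d hF₁'d hF₂d hF₂'d hF₁''nn hF₂''nn hh₁ hh₂ hh₁₁ hh₁₂ hh₂₁ hh₂₂ hhc hh₁c hh₂c hh₁₁c hh₁₂c
    hh₂₁c hh₂₂c hbd₁₁ hbd₂₁ hbd₁₂ hbd₂₂
end

section
/- Let K: ℝ^d → [0,∞) be continuous and nonnegative. Then the interaction functional (ρ₁,ρ₂) ↦ ∫ ρ₁ (K∗ρ₂) dx is lower semi-continuous with respect to weak L¹(ℝ^d)-convergence of the pair (ρ₁,ρ₂), where both components are probability densities. -/
open MeasureTheory Filter Topology BoundedContinuousFunction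

/-!
Weakly `L¹`-convergent probability densities define narrowly convergent probability measures,
and narrow convergence passes to products. The energy is the integral of the nonnegative
continuous function `(x, y) ↦ K (x - y)` against the product measure, and such integrals are
lower semicontinuous under narrow convergence by the portmanteau theorem (write the integral
as `∫ t, μ {K > t}` over the open superlevel sets and apply Fatou).
-/

section

variable {Ω : Type*} [MeasurableSpace Ω]

lemma isProbabilityMeasure_withDensity_ofReal {μ : Measure Ω} {ρ : Ω → ℝ}
    (hρnn : ∀ x, 0 ≤ ρ x) (hρi : Integrable ρ μ) (hρ1 : ∫ x, ρ x ∂μ = 1) :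
    IsProbabilityMeasure (μ.withDensity fun x => ENNReal.ofReal (ρ x)) := by
  constructor
  rw [withDensity_apply _ MeasurableSet.univ, Measure.restrict_univ,
    ← ofReal_integral_eq_lintegral_ofReal hρi (ae_of_all _ hρnn), hρ1, ENNReal.ofReal_one]

noncomputable def probabilityMeasureOfDensity (μ : Measure Ω) (ρ : Ω → ℝ)
    (hρnn : ∀ x, 0 ≤ ρ x) (hρi : Integrable ρ μ) (hρ1 : ∫ x, ρ x ∂μ = 1) :
    ProbabilityMeasure Ω :=
  ⟨μ.withDensity fun x => ENNReal.ofReal (ρ x),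
    isProbabilityMeasure_withDensity_ofReal hρnn hρi hρ1⟩

lemma integral_withDensity_ofReal {μ : Measure Ω} {ρ : Ω → ℝ} (hρm : Measurable ρ)
    (hρnn : ∀ x, 0 ≤ ρ x) (g : Ω → ℝ) :
    ∫ x, g x ∂μ.withDensity (fun x => ENNReal.ofReal (ρ x)) = ∫ x, ρ x * g x ∂μ := by
  rw [integral_withDensity_eq_integral_toReal_smul hρm.ennreal_ofReal
    (ae_of_all _ fun _ => ENNReal.ofReal_lt_top)]
  simp only [ENNReal.toReal_ofReal (hρnn _), smul_eq_mul]

lemma tendsto_probabilityMeasureOfDensity [TopologicalSpace Ω] [OpensMeasurableSpace Ω]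
    {μ : Measure Ω} {ρ : ℕ → Ω → ℝ} {σ : Ω → ℝ}
    (hρm : ∀ n, Measurable (ρ n)) (hρnn : ∀ n x, 0 ≤ ρ n x)
    (hρi : ∀ n, Integrable (ρ n) μ) (hρ1 : ∀ n, ∫ x, ρ n x ∂μ = 1)
    (hσm : Measurable σ) (hσnn : ∀ x, 0 ≤ σ x) (hσi : Integrable σ μ) (hσ1 : ∫ x, σ x ∂μ = 1)
    (hweak : ∀ g : Ω →ᵇ ℝ, Tendsto (fun n => ∫ x, ρ n x * g x ∂μ) atTop (𝓝 (∫ x, σ x * g x ∂μ))) :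
    Tendsto (fun n => probabilityMeasureOfDensity μ (ρ n) (hρnn n) (hρi n) (hρ1 n)) atTop
      (𝓝 (probabilityMeasureOfDensity μ σ hσnn hσi hσ1)) := by
  refine ProbabilityMeasure.tendsto_iff_forall_integral_tendsto.2 fun g => ?_
  simpa only [probabilityMeasureOfDensity, ProbabilityMeasure.coe_mk,
    integral_withDensity_ofReal (hρm _) (hρnn _), integral_withDensity_ofReal hσm hσnn]
    using hweak g

lemma ProbabilityMeasure.lintegral_le_liminf_lintegral_of_tendsto [TopologicalSpace Ω]
    [OpensMeasurableSpace Ω] [HasOuterApproxClosed Ω]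
    {μ : ProbabilityMeasure Ω} {μs : ℕ → ProbabilityMeasure Ω} (hμs : Tendsto μs atTop (𝓝 μ))
    {f : Ω → ℝ} (hfc : Continuous f) (hfnn : 0 ≤ f) :
    ∫⁻ x, ENNReal.ofReal (f x) ∂μ ≤ liminf (fun n => ∫⁻ x, ENNReal.ofReal (f x) ∂(μs n)) atTop :=
  lintegral_le_liminf_lintegral_of_forall_isOpen_measure_le_liminf_measure hfc hfnn
    fun _ hG => ProbabilityMeasure.le_liminf_measure_open_of_tendsto hμs hG

end

lemma lintegral_lintegral_ofReal_mul_eq_lintegral_prod {α β : Type*} [MeasurableSpace α]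
    [MeasurableSpace β] {μ : Measure α} {ν : Measure β} [SFinite ν]
    {ρ₁ : α → ℝ} {ρ₂ : β → ℝ} (hρ₁m : Measurable ρ₁) (hρ₂m : Measurable ρ₂)
    (hρ₁nn : ∀ x, 0 ≤ ρ₁ x) (hρ₂nn : ∀ y, 0 ≤ ρ₂ y) {F : α × β → ℝ} (hF : Measurable F) :
    ∫⁻ x, ∫⁻ y, ENNReal.ofReal (ρ₁ x * ρ₂ y * F (x, y)) ∂ν ∂μ =
      ∫⁻ p, ENNReal.ofReal (F p) ∂((μ.withDensity fun x => ENNReal.ofReal (ρ₁ x)).prod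
        (ν.withDensity fun y => ENNReal.ofReal (ρ₂ y))) := by
  rw [lintegral_prod _ hF.ennreal_ofReal.aemeasurable,
    lintegral_withDensity_eq_lintegral_mul _ hρ₁m.ennreal_ofReal
      (Measurable.lintegral_prod_right' hF.ennreal_ofReal)]
  refine lintegral_congr fun x => ?_
  rw [Pi.mul_apply, lintegral_withDensity_eq_lintegral_mul _ hρ₂m.ennreal_ofReal
    (g := fun y => ENNReal.ofReal (F (x, y))) (hF.comp measurable_prodMk_left).ennreal_ofReal,
    ← lintegral_const_mul' _ _ ENNReal.ofReal_ne_top]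
  refine lintegral_congr fun y => ?_
  simp only [Pi.mul_apply]
  rw [ENNReal.ofReal_mul (mul_nonneg (hρ₁nn x) (hρ₂nn y)), ENNReal.ofReal_mul (hρ₁nn x), mul_assoc]

/-- Lower semi-continuity of the interaction energy with respect to weak `L¹`-convergence
of pairs of probability densities (weak convergence tested against bounded measurable
functions). -/
theorem stmt5 (d : ℕ) (K : EuclideanSpace ℝ (Fin d) → ℝ)
    (hKc : Continuous K) (hKnn : ∀ z, 0 ≤ K z)
    (ρ₁ ρ₂ : ℕ → EuclideanSpace ℝ (Fin d) → ℝ)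
    (σ₁ σ₂ : EuclideanSpace ℝ (Fin d) → ℝ)
    (hρ₁m : ∀ n, Measurable (ρ₁ n)) (hρ₂m : ∀ n, Measurable (ρ₂ n))
    (hρ₁nn : ∀ n x, 0 ≤ ρ₁ n x) (hρ₂nn : ∀ n x, 0 ≤ ρ₂ n x)
    (hρ₁i : ∀ n, Integrable (ρ₁ n)) (hρ₂i : ∀ n, Integrable (ρ₂ n))
    (hρ₁1 : ∀ n, (∫ x, ρ₁ n x) = 1) (hρ₂1 : ∀ n, (∫ x, ρ₂ n x) = 1)
    (hσ₁m : Measurable σ₁) (hσ₂m : Measurable σ₂)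
    (hσ₁nn : ∀ x, 0 ≤ σ₁ x) (hσ₂nn : ∀ x, 0 ≤ σ₂ x)
    (hσ₁i : Integrable σ₁) (hσ₂i : Integrable σ₂)
    (hσ₁1 : (∫ x, σ₁ x) = 1) (hσ₂1 : (∫ x, σ₂ x) = 1)
    (hweak₁ : ∀ g : EuclideanSpace ℝ (Fin d) → ℝ, Measurable g → (∃ C, ∀ x, |g x| ≤ C) →
      Tendsto (fun n => ∫ x, ρ₁ n x * g x) atTop (nhds (∫ x, σ₁ x * g x)))
    (hweak₂ : ∀ g : EuclideanSpace ℝ (Fin d) → ℝ, Measurable g → (∃ C, ∀ x, |g x| ≤ C) →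
      Tendsto (fun n => ∫ x, ρ₂ n x * g x) atTop (nhds (∫ x, σ₂ x * g x))) :
    (∫⁻ x, ∫⁻ y, ENNReal.ofReal (σ₁ x * σ₂ y * K (x - y))) ≤
      liminf (fun n => ∫⁻ x, ∫⁻ y, ENNReal.ofReal (ρ₁ n x * ρ₂ n y * K (x - y))) atTop := by
  have hF : Continuous fun p : EuclideanSpace ℝ (Fin d) × EuclideanSpace ℝ (Fin d) =>
      K (p.1 - p.2) := hKc.comp (continuous_fst.sub continuous_snd)
  have bdd (g : EuclideanSpace ℝ (Fin d) →ᵇ ℝ) : ∃ C, ∀ x, |g x| ≤ C :=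
    ⟨‖g‖, fun x => by simpa only [Real.norm_eq_abs] using g.norm_coe_le_norm x⟩
  have h₁ := tendsto_probabilityMeasureOfDensity hρ₁m hρ₁nn hρ₁i hρ₁1 hσ₁m hσ₁nn hσ₁i hσ₁1
    fun g => hweak₁ g g.continuous.measurable (bdd g)
  have h₂ := tendsto_probabilityMeasureOfDensity hρ₂m hρ₂nn hρ₂i hρ₂1 hσ₂m hσ₂nn hσ₂i hσ₂1
    fun g => hweak₂ g g.continuous.measurable (bdd g)
  have hprod := (ProbabilityMeasure.continuous_prod.tendsto _).comp (h₁.prodMk_nhds h₂)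
  calc _ = _ := lintegral_lintegral_ofReal_mul_eq_lintegral_prod hσ₁m hσ₂m hσ₁nn hσ₂nn
          hF.measurable
    _ ≤ _ := ProbabilityMeasure.lintegral_le_liminf_lintegral_of_tendsto hprod hF
          fun p => hKnn _
    _ = _ := by
      congr with n
      exact (lintegral_lintegral_ofReal_mul_eq_lintegral_prod (hρ₁m n) (hρ₂m n) (hρ₁nn n)
        (hρ₂nn n) hF.measurable).symm
end

section
/- Let K: ℝ^d → ℝ be λ-convex (λ > 0) and C² with ‖∇²K‖ ≤ C_K everywhere. Let ρ₁⁰, ρ₂⁰, ρ₁¹, ρ₂¹ be absolutely continuous probability measures with finite second moments such that m₁[ρ₁⁰] + m₁[ρ₂⁰] = 0 = m₁[ρ₁¹] + m₁[ρ₂¹], and let T₁, T₂ be the optimal transport maps pushing ρ_j⁰ to ρ_j¹. Along the interpolation ρ_j^s = ((1−s)id + sT_j) # ρ_j⁰, the interaction energy satisfies ∫ ρ₁^s K∗ρ₂^s dx ≤ (1−s)∫ ρ₁⁰ K∗ρ₂⁰ dx + s ∫ ρ₁¹ K∗ρ₂¹ dx − (λ/2)s(1−s)[W(ρ₁⁰,ρ₁¹)²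 + W(ρ₂⁰,ρ₂¹)²] for all s ∈ [0,1]. -/
/-!
For fixed `x, y`, `λ`-convexity of `K` on the segment from `x - y` to `T₁ x - T₂ y` gives the
claimed inequality pointwise, with defect `(λ/2) s (1-s) ‖(T₁ x - x) - (T₂ y - y)‖²`. Integrating
against `μ₁ ⊗ μ₂` turns `K (T₁ x - T₂ y)` into the interaction energy of `ν₁, ν₂`, since `T_j`
pushes `μ_j` to `ν_j`. Expanding the square, the defect integrates to
`∫ ‖T₁ x - x‖² dμ₁ + ∫ ‖T₂ y - y‖² dμ₂ - 2 ⟪m₁, m₂⟫` with `m_j` the mean displacements; the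
vanishing combined centres of mass force `m₂ = -m₁`, so the cross term is `2 ‖m₁‖² ≥ 0`.
The Hessian bound gives `K` quadratic growth, which makes every integral finite.
-/

open MeasureTheory
open scoped RealInnerProductSpace

section Growth

variable {E F : Type*} [NormedAddCommGroup E] [NormedSpace ℝ E]
  [NormedAddCommGroup F] [NormedSpace ℝ F]

theorem norm_sub_le_of_norm_fderiv_le_add_mul {f : E → F} (hf : Differentiable ℝ f)
    {a b : ℝ} (hb : 0 ≤ b) (hbound : ∀ w, ‖fderiv ℝ f w‖ ≤ a + b * ‖w‖) (z : E) :
    ‖f z - f 0‖ ≤ (a + b * ‖z‖) * ‖z‖ := by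
  have hball : ∀ w ∈ Metric.closedBall (0 : E) ‖z‖, ‖fderiv ℝ f w‖ ≤ a + b * ‖z‖ := by
    intro w hw
    have : ‖w‖ ≤ ‖z‖ := by simpa using hw
    exact (hbound w).trans (by gcongr)
  simpa using (convex_closedBall (0 : E) ‖z‖).norm_image_sub_le_of_norm_fderiv_le
    (fun w _ => hf w) hball (Metric.mem_closedBall_self (norm_nonneg z)) (by simp)

theorem exists_norm_le_mul_one_add_sq_of_norm_iteratedFDeriv_two_le {K : E → F} {CK : ℝ}
    (hK : ContDiff ℝ 2 K) (hHess : ∀ z, ‖iteratedFDeriv ℝ 2 K z‖ ≤ CK) :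
    ∃ C, ∀ z, ‖K z‖ ≤ C * (1 + ‖z‖ ^ 2) := by
  have hCK : 0 ≤ CK := (norm_nonneg _).trans (hHess 0)
  have hDK : ∀ w, ‖fderiv ℝ K w‖ ≤ ‖fderiv ℝ K 0‖ + CK * ‖w‖ := by
    intro w
    have hD2 : ∀ v, ‖fderiv ℝ (fderiv ℝ K) v‖ ≤ CK + 0 * ‖v‖ := fun v => by
      rw [← norm_iteratedFDeriv_one, norm_iteratedFDeriv_fderiv, zero_mul, add_zero]
      exact hHess v
    have := norm_sub_le_of_norm_fderiv_le_add_mul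
      ((hK.fderiv_right le_rfl).differentiable one_ne_zero) le_rfl hD2 w
    linarith [norm_le_insert' (fderiv ℝ K w) (fderiv ℝ K 0), norm_nonneg w]
  have hK0 := norm_sub_le_of_norm_fderiv_le_add_mul (hK.differentiable two_ne_zero) hCK hDK
  refine ⟨‖K 0‖ + ‖fderiv ℝ K 0‖ + CK, fun z => ?_⟩
  have hz : ‖z‖ ≤ 1 + ‖z‖ ^ 2 := by nlinarith [sq_nonneg (‖z‖ - 1)]
  nlinarith [norm_le_insert' (K z) (K 0), hK0 z, norm_nonneg (K 0), norm_nonneg (fderiv ℝ K 0),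
    norm_nonneg z, mul_le_mul_of_nonneg_left hz (norm_nonneg (fderiv ℝ K 0))]

end Growth

section Integrals

variable {Ω E F : Type*} [MeasurableSpace Ω] {π : Measure Ω} [IsFiniteMeasure π]
  [NormedAddCommGroup E] [NormedAddCommGroup F]

theorem MeasureTheory.MemLp.integrable_comp_of_norm_le_mul_one_add_sq {K : E → F} {C : ℝ}
    (hKc : Continuous K) (hKg : ∀ z, ‖K z‖ ≤ C * (1 + ‖z‖ ^ 2)) {X : Ω → E}
    (hX : MemLp X 2 π) :
    Integrable (fun ω => K (X ω)) π :=
  (((integrable_const 1).add (hX.integrable_norm_pow two_ne_zero)).const_mul C).mono'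
    (hKc.comp_aestronglyMeasurable hX.1) (ae_of_all _ fun ω => hKg (X ω))

variable [InnerProductSpace ℝ E]

theorem StrongConvexOn.integral_comp_le {K : E → ℝ} {m C s : ℝ}
    (hK : StrongConvexOn Set.univ m K) (hKc : Continuous K)
    (hKg : ∀ z, ‖K z‖ ≤ C * (1 + ‖z‖ ^ 2)) {X Y : Ω → E} (hX : MemLp X 2 π) (hY : MemLp Y 2 π)
    (hs₀ : 0 ≤ s) (hs₁ : s ≤ 1) :
    ∫ ω, K ((1 - s) • X ω + s • Y ω) ∂π ≤
      (1 - s) * ∫ ω, K (X ω) ∂π + s * ∫ ω, K (Y ω) ∂π -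
        m / 2 * s * (1 - s) * ∫ ω, ‖X ω - Y ω‖ ^ 2 ∂π := by
  have hKX := hX.integrable_comp_of_norm_le_mul_one_add_sq hKc hKg
  have hKY := hY.integrable_comp_of_norm_le_mul_one_add_sq hKc hKg
  have hXY : Integrable (fun ω => ‖X ω - Y ω‖ ^ 2) π :=
    (hX.sub hY).integrable_norm_pow two_ne_zero
  have hKXY : Integrable (fun ω => (1 - s) * K (X ω) + s * K (Y ω)) π :=
    (hKX.const_mul (1 - s)).add (hKY.const_mul s)
  rw [← integral_const_mul, ← integral_const_mul, ← integral_const_mul, ← integral_add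
    (hKX.const_mul _) (hKY.const_mul _), ← integral_sub hKXY (hXY.const_mul _)]
  refine integral_mono
    (((hX.const_smul (1 - s)).add (hY.const_smul s)).integrable_comp_of_norm_le_mul_one_add_sq
      hKc hKg) (hKXY.sub (hXY.const_mul _)) fun ω => ?_
  have := hK.2 (Set.mem_univ (X ω)) (Set.mem_univ (Y ω)) (sub_nonneg.2 hs₁) hs₀ (by ring)
  simp only [smul_eq_mul] at this
  linarith

end Integrals

section Product

variable {α β E : Type*} [MeasurableSpace α] [MeasurableSpace β] {μ : Measure α} {ν : Measure β}
  [NormedAddCommGroup E] [InnerProductSpace ℝ E] [CompleteSpace E]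
  [IsProbabilityMeasure μ] [IsProbabilityMeasure ν]

theorem integral_prod_norm_sub_sq {U : α → E} {V : β → E} (hU : MemLp U 2 μ)
    (hV : MemLp V 2 ν) :
    ∫ p, ‖U p.1 - V p.2‖ ^ 2 ∂(μ.prod ν) =
      ∫ x, ‖U x‖ ^ 2 ∂μ - 2 * ⟪∫ x, U x ∂μ, ∫ y, V y ∂ν⟫ + ∫ y, ‖V y‖ ^ 2 ∂ν := by
  have hU₂ := (hU.integrable_norm_pow two_ne_zero).comp_fst ν
  have hV₂ := (hV.integrable_norm_pow two_ne_zero).comp_snd μ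
  have hUV : Integrable (fun p : α × β => ⟪U p.1, V p.2⟫) (μ.prod ν) :=
    (hU.integrable one_le_two).op_fst_snd (op := fun u v : E => ⟪u, v⟫) continuous_inner
      ⟨1, fun u v => by simpa using norm_inner_le_norm (𝕜 := ℝ) u v⟩ (hV.integrable one_le_two)
  have hU₂UV : Integrable (fun p : α × β => ‖U p.1‖ ^ 2 - 2 * ⟪U p.1, V p.2⟫) (μ.prod ν) :=
    hU₂.sub (hUV.const_mul 2)
  have hfst : ∫ p, ‖U p.1‖ ^ 2 ∂(μ.prod ν) = ∫ x, ‖U x‖ ^ 2 ∂μ := by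
    simp [integral_fun_fst (fun x => ‖U x‖ ^ 2)]
  have hsnd : ∫ p, ‖V p.2‖ ^ 2 ∂(μ.prod ν) = ∫ y, ‖V y‖ ^ 2 ∂ν := by
    simp [integral_fun_snd (fun y => ‖V y‖ ^ 2)]
  have hinner : ∫ p, ⟪U p.1, V p.2⟫ ∂(μ.prod ν) = ⟪∫ x, U x ∂μ, ∫ y, V y ∂ν⟫ :=
    integral_prod_bilin (innerSL ℝ) (hU.integrable one_le_two) (hV.integrable one_le_two)
  simp_rw [norm_sub_sq_real]
  rw [integral_add hU₂UV hV₂, integral_sub hU₂ (hUV.const_mul 2), integral_const_mul, hfst, hsnd,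
    hinner]

theorem integral_prod_norm_sub_sq_of_integral_add_eq_zero {U : α → E} {V : β → E}
    (hU : MemLp U 2 μ) (hV : MemLp V 2 ν) (hcenter : ∫ x, U x ∂μ + ∫ y, V y ∂ν = 0) :
    ∫ p, ‖U p.1 - V p.2‖ ^ 2 ∂(μ.prod ν) =
      ∫ x, ‖U x‖ ^ 2 ∂μ + ∫ y, ‖V y‖ ^ 2 ∂ν + 2 * ‖∫ x, U x ∂μ‖ ^ 2 := by
  rw [integral_prod_norm_sub_sq hU hV, eq_neg_of_add_eq_zero_right hcenter, inner_neg_right,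
    real_inner_self_eq_norm_sq]
  ring

end Product

section Transport

variable {α E : Type*} [MeasurableSpace α] [NormedAddCommGroup E] [MeasurableSpace E]
  [BorelSpace E] [SecondCountableTopology E] {μ : Measure α} {ν : Measure E} {T : α → E}

theorem memLp_two_id_of_integrable_sq_norm (hν : Integrable (fun x => ‖x‖ ^ 2) ν) :
    MemLp (fun x => x) 2 ν :=
  (memLp_two_iff_integrable_sq_norm aestronglyMeasurable_id).2 hν

theorem memLp_two_of_map_eq (hT : Measurable T) (hpush : μ.map T = ν)
    (hν : Integrable (fun x => ‖x‖ ^ 2) ν) : MemLp T 2 μ :=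
  (memLp_map_measure_iff aestronglyMeasurable_id hT.aemeasurable).1
    (hpush ▸ memLp_two_id_of_integrable_sq_norm hν)

theorem integral_eq_integral_id_of_map_eq [NormedSpace ℝ E] (hT : Measurable T)
    (hpush : μ.map T = ν) : ∫ x, T x ∂μ = ∫ x, x ∂ν := by
  rw [← hpush]
  exact (integral_map hT.aemeasurable aestronglyMeasurable_id).symm

end Transport

theorem integral_integral_map_map {α β γ δ G : Type*} [MeasurableSpace α] [MeasurableSpace β]
    [MeasurableSpace γ] [MeasurableSpace δ] [NormedAddCommGroup G] [NormedSpace ℝ G]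
    {μ : Measure α} {ν : Measure β} [SFinite μ] [SFinite ν] {T₁ : α → γ} {T₂ : β → δ}
    (hT₁ : Measurable T₁) (hT₂ : Measurable T₂) {F : γ → δ → G}
    (hF : StronglyMeasurable (Function.uncurry F))
    (hint : Integrable (fun p => F (T₁ p.1) (T₂ p.2)) (μ.prod ν)) :
    ∫ x, ∫ y, F x y ∂(ν.map T₂) ∂(μ.map T₁) = ∫ p, F (T₁ p.1) (T₂ p.2) ∂(μ.prod ν) := by
  have hmap : (μ.map T₁).prod (ν.map T₂) = (μ.prod ν).map (Prod.map T₁ T₂) :=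
    Measure.map_prod_map μ ν hT₁ hT₂
  have hT : AEMeasurable (Prod.map T₁ T₂) (μ.prod ν) := (hT₁.prodMap hT₂).aemeasurable
  rw [integral_integral (by rwa [hmap, integrable_map_measure hF.aestronglyMeasurable hT]), hmap]
  exact integral_map hT hF.aestronglyMeasurable

theorem stmt11_general (d : ℕ)
    (K : EuclideanSpace ℝ (Fin d) → ℝ) (lam CK : ℝ) (hlam : 0 < lam)
    (hK2 : ContDiff ℝ 2 K)
    (hKconv : ConvexOn ℝ Set.univ (fun z => K z - lam / 2 * ‖z‖ ^ 2))
    (hHess : ∀ z, ‖iteratedFDeriv ℝ 2 K z‖ ≤ CK)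
    (μ₁ μ₂ ν₁ ν₂ : Measure (EuclideanSpace ℝ (Fin d)))
    [IsProbabilityMeasure μ₁] [IsProbabilityMeasure μ₂]
    [IsProbabilityMeasure ν₁] [IsProbabilityMeasure ν₂]
    (hμ₁m2 : Integrable (fun x => ‖x‖ ^ 2) μ₁) (hμ₂m2 : Integrable (fun x => ‖x‖ ^ 2) μ₂)
    (hν₁m2 : Integrable (fun x => ‖x‖ ^ 2) ν₁) (hν₂m2 : Integrable (fun x => ‖x‖ ^ 2) ν₂)
    (T₁ T₂ : EuclideanSpace ℝ (Fin d) → EuclideanSpace ℝ (Fin d))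
    (hT₁m : Measurable T₁) (hT₂m : Measurable T₂)
    (hpush₁ : μ₁.map T₁ = ν₁) (hpush₂ : μ₂.map T₂ = ν₂)
    -- vanishing combined centers of mass
    (hcm0 : (∫ x, x ∂μ₁) + (∫ x, x ∂μ₂) = 0)
    (hcm1 : (∫ x, x ∂ν₁) + (∫ x, x ∂ν₂) = 0)
    (s : ℝ) (hs : s ∈ Set.Icc (0:ℝ) 1) :
    (∫ x, ∫ y, K ((1 - s) • x + s • T₁ x - ((1 - s) • y + s • T₂ y)) ∂μ₂ ∂μ₁) ≤
      (1 - s) * (∫ x, ∫ y, K (x - y) ∂μ₂ ∂μ₁) +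
        s * (∫ x, ∫ y, K (x - y) ∂ν₂ ∂ν₁) -
        lam / 2 * s * (1 - s) *
          ((∫ x, ‖T₁ x - x‖ ^ 2 ∂μ₁) + ∫ x, ‖T₂ x - x‖ ^ 2 ∂μ₂) := by
  obtain ⟨hs₀, hs₁⟩ := hs
  obtain ⟨C, hKg⟩ := exists_norm_le_mul_one_add_sq_of_norm_iteratedFDeriv_two_le hK2 hHess
  have hKc : Continuous K := hK2.continuous
  have hid₁ := memLp_two_id_of_integrable_sq_norm hμ₁m2
  have hid₂ := memLp_two_id_of_integrable_sq_norm hμ₂m2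
  have hT₁ := memLp_two_of_map_eq hT₁m hpush₁ hν₁m2
  have hT₂ := memLp_two_of_map_eq hT₂m hpush₂ hν₂m2
  have hX : MemLp (fun p : _ × _ => p.1 - p.2) 2 (μ₁.prod μ₂) :=
    (hid₁.comp_fst μ₂).sub (hid₂.comp_snd μ₁)
  have hY : MemLp (fun p : _ × _ => T₁ p.1 - T₂ p.2) 2 (μ₁.prod μ₂) :=
    (hT₁.comp_fst μ₂).sub (hT₂.comp_snd μ₁)
  have hcenter : ∫ x, (T₁ x - x) ∂μ₁ + ∫ y, (T₂ y - y) ∂μ₂ = 0 := by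
    rw [integral_sub (hT₁.integrable one_le_two) (hid₁.integrable one_le_two),
      integral_sub (hT₂.integrable one_le_two) (hid₂.integrable one_le_two),
      integral_eq_integral_id_of_map_eq hT₁m hpush₁, integral_eq_integral_id_of_map_eq hT₂m hpush₂,
      sub_add_sub_comm, hcm0, hcm1, sub_zero]
  have hW : (∫ x, ‖T₁ x - x‖ ^ 2 ∂μ₁) + ∫ x, ‖T₂ x - x‖ ^ 2 ∂μ₂ ≤
      ∫ p, ‖(p.1 - p.2) - (T₁ p.1 - T₂ p.2)‖ ^ 2 ∂(μ₁.prod μ₂) := by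
    have hrw : ∀ p : EuclideanSpace ℝ (Fin d) × EuclideanSpace ℝ (Fin d),
        ‖(p.1 - p.2) - (T₁ p.1 - T₂ p.2)‖ = ‖(T₁ p.1 - p.1) - (T₂ p.2 - p.2)‖ := fun p => by
      rw [norm_sub_rev]; congr 1; abel
    simp_rw [hrw, integral_prod_norm_sub_sq_of_integral_add_eq_zero
      (U := fun x => T₁ x - x) (V := fun y => T₂ y - y) (hT₁.sub hid₁) (hT₂.sub hid₂) hcenter]
    exact le_add_of_nonneg_right (by positivity)
  have harg : ∀ x y : EuclideanSpace ℝ (Fin d),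
      (1 - s) • x + s • T₁ x - ((1 - s) • y + s • T₂ y) = (1 - s) • (x - y) + s • (T₁ x - T₂ y) :=
    fun x y => by module
  have hc : 0 ≤ lam / 2 * s * (1 - s) := by
    have := sub_nonneg.2 hs₁
    positivity
  simp_rw [harg]
  rw [integral_integral (f := fun x y => K ((1 - s) • (x - y) + s • (T₁ x - T₂ y)))
      (((hX.const_smul (1 - s)).add (hY.const_smul s)).integrable_comp_of_norm_le_mul_one_add_sq
        hKc hKg),
    integral_integral (f := fun x y => K (x - y))
      (hX.integrable_comp_of_norm_le_mul_one_add_sq hKc hKg),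
    ← hpush₁, ← hpush₂, integral_integral_map_map (F := fun x y => K (x - y)) hT₁m hT₂m
      (hKc.comp continuous_sub).stronglyMeasurable
      (hY.integrable_comp_of_norm_le_mul_one_add_sq hKc hKg)]
  calc _ ≤ _ := StrongConvexOn.integral_comp_le (strongConvexOn_iff_convex.2 hKconv) hKc hKg
        hX hY hs₀ hs₁
    _ ≤ _ := sub_le_sub_left (mul_le_mul_of_nonneg_left hW hc) _

/-- Geodesic `λ`-convexity of the interaction energy along the (coupled) displacement
interpolation `ρ_j^s = ((1−s) id + s T_j) # ρ_j⁰`, for pairs with vanishing combined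
center of mass.  The squared Wasserstein distances are realized by the optimal maps
`T_j`, i.e. `W(ρ_j⁰, ρ_j¹)² = ∫ ‖T_j x − x‖² dρ_j⁰`. -/
theorem stmt11 (d : ℕ) (hd : 0 < d)
    (K : EuclideanSpace ℝ (Fin d) → ℝ) (lam CK : ℝ) (hlam : 0 < lam)
    (hK2 : ContDiff ℝ 2 K)
    (hKconv : ConvexOn ℝ Set.univ (fun z => K z - lam / 2 * ‖z‖ ^ 2))
    (hHess : ∀ z, ‖iteratedFDeriv ℝ 2 K z‖ ≤ CK)
    (μ₁ μ₂ ν₁ ν₂ : Measure (EuclideanSpace ℝ (Fin d)))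
    [IsProbabilityMeasure μ₁] [IsProbabilityMeasure μ₂]
    [IsProbabilityMeasure ν₁] [IsProbabilityMeasure ν₂]
    (hμ₁ac : μ₁ ≪ volume) (hμ₂ac : μ₂ ≪ volume)
    (hν₁ac : ν₁ ≪ volume) (hν₂ac : ν₂ ≪ volume)
    (hμ₁m2 : Integrable (fun x => ‖x‖ ^ 2) μ₁) (hμ₂m2 : Integrable (fun x => ‖x‖ ^ 2) μ₂)
    (hν₁m2 : Integrable (fun x => ‖x‖ ^ 2) ν₁) (hν₂m2 : Integrable (fun x => ‖x‖ ^ 2) ν₂)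
    (T₁ T₂ : EuclideanSpace ℝ (Fin d) → EuclideanSpace ℝ (Fin d))
    (hT₁m : Measurable T₁) (hT₂m : Measurable T₂)
    (hpush₁ : μ₁.map T₁ = ν₁) (hpush₂ : μ₂.map T₂ = ν₂)
    -- optimality of the transport maps (Brenier: gradients of convex potentials)
    (hT₁opt : ∃ Φ : EuclideanSpace ℝ (Fin d) → ℝ,
      ConvexOn ℝ Set.univ Φ ∧ ∀ x, HasGradientAt Φ (T₁ x) x)
    (hT₂opt : ∃ Φ : EuclideanSpace ℝ (Fin d) → ℝ,
      ConvexOn ℝ Set.univ Φ ∧ ∀ x, HasGradientAt Φ (T₂ x) x)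
    -- vanishing combined centers of mass
    (hcm0 : (∫ x, x ∂μ₁) + (∫ x, x ∂μ₂) = 0)
    (hcm1 : (∫ x, x ∂ν₁) + (∫ x, x ∂ν₂) = 0)
    (s : ℝ) (hs : s ∈ Set.Icc (0:ℝ) 1) :
    (∫ x, ∫ y, K ((1 - s) • x + s • T₁ x - ((1 - s) • y + s • T₂ y)) ∂μ₂ ∂μ₁) ≤
      (1 - s) * (∫ x, ∫ y, K (x - y) ∂μ₂ ∂μ₁) +
        s * (∫ x, ∫ y, K (x - y) ∂ν₂ ∂ν₁) -
        lam / 2 * s * (1 - s) *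
          ((∫ x, ‖T₁ x - x‖ ^ 2 ∂μ₁) + ∫ x, ‖T₂ x - x‖ ^ 2 ∂μ₂) :=
  stmt11_general d K lam CK hlam hK2 hKconv hHess μ₁ μ₂ ν₁ ν₂ hμ₁m2 hμ₂m2 hν₁m2 hν₂m2 T₁ T₂ hT₁m
    hT₂m hpush₁ hpush₂ hcm0 hcm1 s hs
end

section
/- Let K: ℝ^d → ℝ be C² with ‖∇²K‖ ≤ C_K. Let ρ₁, ρ₂, ρ̄₁, ρ̄₂ be probability densities with finite second moments, with ρ̄₁, ρ̄₂ absolutely continuous. Then |∬ (ρ₁(x) − ρ̄₁(x))(ρ₂(y) − ρ̄₂(y)) K(x−y) dx dy| ≤ (C_K/2)[W(ρ₁, ρ̄₁)² + W(ρ₂, ρ̄₂)²]. -/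
open MeasureTheory

/-! Pushing `ν₁ ⊗ ν₂` forward by `T₁ × T₂`, `T₁ × id`, `id × T₂` and `id × id` turns the four
interaction integrals into a single integral over `ν₁ ⊗ ν₂` of the mixed second difference
`K (z + a + b) - K (z + a) - K (z + b) + K z` with `z = u - v`, `a = T₁ u - u`, `b = v - T₂ v`.
The Hessian bound makes `∇K` `C_K`-Lipschitz, so this difference is at most
`C_K ‖a‖ ‖b‖ ≤ C_K / 2 (‖a‖² + ‖b‖²)`, and integrating gives the claim. Quadratic growth of `K`
and finite second moments make every integral involved finite. -/

section SecondDifference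

variable {E : Type*} [NormedAddCommGroup E] [NormedSpace ℝ E] {K : E → ℝ} {C : ℝ}

theorem norm_fderiv_sub_le_of_norm_iteratedFDeriv_two_le (hK : ContDiff ℝ 2 K)
    (hC : ∀ z, ‖iteratedFDeriv ℝ 2 K z‖ ≤ C) (x y : E) :
    ‖fderiv ℝ K x - fderiv ℝ K y‖ ≤ C * ‖x - y‖ := by
  have hbound (z : E) : ‖fderiv ℝ (fderiv ℝ K) z‖ ≤ C := by
    rw [← norm_iteratedFDeriv_one, norm_iteratedFDeriv_fderiv]
    exact hC z
  exact convex_univ.norm_image_sub_le_of_norm_fderiv_le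
    (fun z _ => (hK.fderiv_right le_rfl).differentiable one_ne_zero z) (fun z _ => hbound z)
    (Set.mem_univ y) (Set.mem_univ x)

theorem abs_second_difference_le (hK : Differentiable ℝ K)
    (hK' : ∀ x y, ‖fderiv ℝ K x - fderiv ℝ K y‖ ≤ C * ‖x - y‖) (z a b : E) :
    |K (z + a + b) - K (z + a) - K (z + b) + K z| ≤ C * ‖a‖ * ‖b‖ := by
  have hderiv (w : E) :
      HasFDerivAt (fun w => K (w + b) - K w) (fderiv ℝ K (w + b) - fderiv ℝ K w) w :=
    ((hK (w + b)).hasFDerivAt.comp w ((hasFDerivAt_id w).add_const b)).sub (hK w).hasFDerivAt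
  have hbound (w : E) : ‖fderiv ℝ K (w + b) - fderiv ℝ K w‖ ≤ C * ‖b‖ := by
    simpa using hK' (w + b) w
  have := convex_univ.norm_image_sub_le_of_norm_hasFDerivWithin_le
    (fun w _ => (hderiv w).hasFDerivWithinAt) (fun w _ => hbound w)
    (Set.mem_univ z) (Set.mem_univ (z + a))
  rw [Real.norm_eq_abs, add_sub_cancel_left] at this
  calc _ = |K (z + a + b) - K (z + a) - (K (z + b) - K z)| := by ring_nf
    _ ≤ C * ‖b‖ * ‖a‖ := this
    _ = C * ‖a‖ * ‖b‖ := by ring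

theorem exists_abs_le_mul_one_add_sq (hK : Differentiable ℝ K)
    (hK' : ∀ x y, ‖fderiv ℝ K x - fderiv ℝ K y‖ ≤ C * ‖x - y‖) :
    ∃ A, ∀ w : E, |K w| ≤ A * (1 + ‖w‖ ^ 2) := by
  refine ⟨|K 0| + ‖fderiv ℝ K 0‖ + |C|, fun w => ?_⟩
  have hbound : ∀ x ∈ Metric.closedBall (0 : E) ‖w‖,
      ‖fderiv ℝ K x‖ ≤ ‖fderiv ℝ K 0‖ + |C| * ‖w‖ := by
    intro x hx
    have hx : ‖x‖ ≤ ‖w‖ := mem_closedBall_zero_iff.mp hx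
    have h1 := norm_sub_norm_le (fderiv ℝ K x) (fderiv ℝ K 0)
    have h2 := hK' x 0
    rw [sub_zero] at h2
    nlinarith [abs_nonneg C, le_abs_self C, norm_nonneg x]
  have hmvt := (convex_closedBall (0 : E) ‖w‖).norm_image_sub_le_of_norm_fderiv_le
    (fun x _ => hK x) hbound (Metric.mem_closedBall_self (norm_nonneg w))
    (mem_closedBall_zero_iff.mpr le_rfl)
  rw [Real.norm_eq_abs, sub_zero] at hmvt
  have h1 : ‖w‖ ≤ 1 + ‖w‖ ^ 2 := by nlinarith [sq_nonneg (‖w‖ - 1)]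
  have h3 := abs_sub_abs_le_abs_sub (K w) (K 0)
  nlinarith [abs_nonneg (K 0), abs_nonneg C, norm_nonneg (fderiv ℝ K 0), norm_nonneg w]

end SecondDifference

section Moments

variable {Ω Ω₁ Ω₂ E : Type*} [MeasurableSpace Ω] [MeasurableSpace Ω₁] [MeasurableSpace Ω₂]
  [NormedAddCommGroup E]

theorem integrable_comp_sub_of_abs_le_mul_one_add_sq {π : Measure Ω} [IsFiniteMeasure π]
    {X Y : Ω → E} (hX : AEStronglyMeasurable X π) (hY : AEStronglyMeasurable Y π)
    (hX2 : Integrable (fun ω => ‖X ω‖ ^ 2) π) (hY2 : Integrable (fun ω => ‖Y ω‖ ^ 2) π)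
    {f : E → ℝ} (hf : Continuous f) {A : ℝ} (hA : ∀ w, |f w| ≤ A * (1 + ‖w‖ ^ 2)) :
    Integrable (fun ω => f (X ω - Y ω)) π := by
  have hA0 : 0 ≤ A := by simpa using (abs_nonneg _).trans (hA 0)
  refine ((integrable_const A).add ((hX2.add hY2).const_mul (2 * A))).mono'
    (hf.comp_aestronglyMeasurable (hX.sub hY)) (ae_of_all _ fun ω => ?_)
  have hsub : ‖X ω - Y ω‖ ^ 2 ≤ 2 * (‖X ω‖ ^ 2 + ‖Y ω‖ ^ 2) :=
    (pow_le_pow_left₀ (norm_nonneg _) (norm_sub_le _ _) 2).trans add_sq_le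
  change |f (X ω - Y ω)| ≤ A + 2 * A * (‖X ω‖ ^ 2 + ‖Y ω‖ ^ 2)
  nlinarith [hA (X ω - Y ω), mul_le_mul_of_nonneg_left hsub hA0]

variable [MeasurableSpace E] [BorelSpace E] [SecondCountableTopology E]

theorem integrable_comp_fst_sub_comp_snd {α : Measure Ω₁} {β : Measure Ω₂}
    [IsFiniteMeasure α] [IsFiniteMeasure β] {S : Ω₁ → E} {R : Ω₂ → E}
    (hS : Measurable S) (hR : Measurable R)
    (hS2 : Integrable (fun x => ‖S x‖ ^ 2) α) (hR2 : Integrable (fun y => ‖R y‖ ^ 2) β)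
    {f : E → ℝ} (hf : Continuous f) {A : ℝ} (hA : ∀ w, |f w| ≤ A * (1 + ‖w‖ ^ 2)) :
    Integrable (fun p => f (S p.1 - R p.2)) (α.prod β) :=
  integrable_comp_sub_of_abs_le_mul_one_add_sq (hS.comp measurable_fst).aestronglyMeasurable
    (hR.comp measurable_snd).aestronglyMeasurable (hS2.comp_fst β) (hR2.comp_snd α) hf hA

theorem integral_integral_comp_sub_map_map {α : Measure Ω₁} {β : Measure Ω₂}
    [IsFiniteMeasure α] [IsFiniteMeasure β] {S : Ω₁ → E} {R : Ω₂ → E}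
    (hS : Measurable S) (hR : Measurable R)
    (hS2 : Integrable (fun x => ‖S x‖ ^ 2) α) (hR2 : Integrable (fun y => ‖R y‖ ^ 2) β)
    {f : E → ℝ} (hf : Continuous f) {A : ℝ} (hA : ∀ w, |f w| ≤ A * (1 + ‖w‖ ^ 2)) :
    ∫ x, ∫ y, f (x - y) ∂(β.map R) ∂(α.map S) = ∫ p, f (S p.1 - R p.2) ∂(α.prod β) := by
  have hmeas : AEStronglyMeasurable (fun p : E × E => f (p.1 - p.2))
      ((α.prod β).map (Prod.map S R)) :=
    (hf.comp continuous_sub).aestronglyMeasurable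
  have hint : Integrable (fun p : E × E => f (p.1 - p.2)) ((α.map S).prod (β.map R)) := by
    rw [Measure.map_prod_map α β hS hR, integrable_map_measure hmeas (hS.prodMap hR).aemeasurable]
    exact integrable_comp_fst_sub_comp_snd hS hR hS2 hR2 hf hA
  rw [← integral_prod _ hint, Measure.map_prod_map α β hS hR,
    integral_map (hS.prodMap hR).aemeasurable hmeas]
  rfl

theorem integral_integral_second_difference_map_map {α β : Measure E}
    [IsFiniteMeasure α] [IsFiniteMeasure β] {S R : E → E} (hS : Measurable S) (hR : Measurable R)
    (hα2 : Integrable (fun x => ‖x‖ ^ 2) α) (hβ2 : Integrable (fun y => ‖y‖ ^ 2) β)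
    (hS2 : Integrable (fun x => ‖S x‖ ^ 2) α) (hR2 : Integrable (fun y => ‖R y‖ ^ 2) β)
    {f : E → ℝ} (hf : Continuous f) {A : ℝ} (hA : ∀ w, |f w| ≤ A * (1 + ‖w‖ ^ 2)) :
    (∫ x, ∫ y, f (x - y) ∂(β.map R) ∂(α.map S)) - (∫ x, ∫ y, f (x - y) ∂β ∂(α.map S))
        - (∫ x, ∫ y, f (x - y) ∂(β.map R) ∂α) + ∫ x, ∫ y, f (x - y) ∂β ∂α =
      ∫ p, (f (S p.1 - R p.2) - f (S p.1 - p.2) - f (p.1 - R p.2) + f (p.1 - p.2)) ∂(α.prod β) := by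
  have h₁ := integral_integral_comp_sub_map_map hS hR hS2 hR2 hf hA
  have h₂ := integral_integral_comp_sub_map_map hS measurable_id hS2 hβ2 hf hA
  have h₃ := integral_integral_comp_sub_map_map measurable_id hR hα2 hR2 hf hA
  have h₄ := integral_integral_comp_sub_map_map measurable_id measurable_id hα2 hβ2 hf hA
  simp only [Measure.map_id, id] at h₂ h₃ h₄
  have i₁ := integrable_comp_fst_sub_comp_snd hS hR hS2 hR2 hf hA
  have i₂ : Integrable (fun p : E × E => f (S p.1 - p.2)) (α.prod β) :=
    integrable_comp_fst_sub_comp_snd hS measurable_id hS2 hβ2 hf hA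
  have i₃ : Integrable (fun p : E × E => f (p.1 - R p.2)) (α.prod β) :=
    integrable_comp_fst_sub_comp_snd measurable_id hR hα2 hR2 hf hA
  have i₄ : Integrable (fun p : E × E => f (p.1 - p.2)) (α.prod β) :=
    integrable_comp_fst_sub_comp_snd measurable_id measurable_id hα2 hβ2 hf hA
  rw [h₁, h₂, h₃, h₄, integral_add ?_ i₄, integral_sub ?_ i₃, integral_sub i₁ i₂]
  · exact i₁.sub i₂
  · exact (i₁.sub i₂).sub i₃

end Moments

section SecondDifferenceIntegral

variable {E : Type*} [NormedAddCommGroup E] [NormedSpace ℝ E] [MeasurableSpace E] [BorelSpace E]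
  [SecondCountableTopology E] {K : E → ℝ} {C : ℝ}

theorem abs_integral_second_difference_le {α β : Measure E}
    [IsProbabilityMeasure α] [IsProbabilityMeasure β] (hC : 0 ≤ C) (hK : Differentiable ℝ K)
    (hK' : ∀ x y, ‖fderiv ℝ K x - fderiv ℝ K y‖ ≤ C * ‖x - y‖)
    {S R : E → E} (hS : Measurable S) (hR : Measurable R)
    (hα2 : Integrable (fun x => ‖x‖ ^ 2) α) (hβ2 : Integrable (fun y => ‖y‖ ^ 2) β)
    (hS2 : Integrable (fun x => ‖S x‖ ^ 2) α) (hR2 : Integrable (fun y => ‖R y‖ ^ 2) β) :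
    |∫ p, (K (S p.1 - R p.2) - K (S p.1 - p.2) - K (p.1 - R p.2) + K (p.1 - p.2)) ∂(α.prod β)| ≤
      C / 2 * ((∫ x, ‖S x - x‖ ^ 2 ∂α) + ∫ y, ‖R y - y‖ ^ 2 ∂β) := by
  have hsq : ∀ w : E, |‖w‖ ^ 2| ≤ 1 * (1 + ‖w‖ ^ 2) := fun w => by
    rw [abs_of_nonneg (by positivity)]; linarith
  have hSd : Integrable (fun x => ‖S x - x‖ ^ 2) α :=
    integrable_comp_sub_of_abs_le_mul_one_add_sq hS.aestronglyMeasurable aestronglyMeasurable_id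
      hS2 hα2 (continuous_norm.pow 2) hsq
  have hRd : Integrable (fun y => ‖R y - y‖ ^ 2) β :=
    integrable_comp_sub_of_abs_le_mul_one_add_sq hR.aestronglyMeasurable aestronglyMeasurable_id
      hR2 hβ2 (continuous_norm.pow 2) hsq
  have hpoint (p : E × E) :
      ‖K (S p.1 - R p.2) - K (S p.1 - p.2) - K (p.1 - R p.2) + K (p.1 - p.2)‖ ≤
        C / 2 * (‖S p.1 - p.1‖ ^ 2 + ‖R p.2 - p.2‖ ^ 2) := by
    have h := abs_second_difference_le hK hK' (p.1 - p.2) (S p.1 - p.1) (p.2 - R p.2)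
    rw [show p.1 - p.2 + (S p.1 - p.1) + (p.2 - R p.2) = S p.1 - R p.2 by abel,
      show p.1 - p.2 + (S p.1 - p.1) = S p.1 - p.2 by abel,
      show p.1 - p.2 + (p.2 - R p.2) = p.1 - R p.2 by abel, norm_sub_rev p.2] at h
    rw [Real.norm_eq_abs]
    nlinarith [two_mul_le_add_sq ‖S p.1 - p.1‖ ‖R p.2 - p.2‖]
  calc _ ≤ ∫ p, C / 2 * (‖S p.1 - p.1‖ ^ 2 + ‖R p.2 - p.2‖ ^ 2) ∂(α.prod β) :=
        norm_integral_le_of_norm_le (((hSd.comp_fst β).add (hRd.comp_snd α)).const_mul _)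
          (ae_of_all _ hpoint)
    _ = C / 2 * ((∫ x, ‖S x - x‖ ^ 2 ∂α) + ∫ y, ‖R y - y‖ ^ 2 ∂β) := by
        rw [integral_const_mul, integral_add (hSd.comp_fst β) (hRd.comp_snd α),
          integral_fun_fst (fun x => ‖S x - x‖ ^ 2), integral_fun_snd (fun y => ‖R y - y‖ ^ 2)]
        simp

end SecondDifferenceIntegral

/-- `ρⱼ = μⱼ`, `ρ̄ⱼ = νⱼ`, and `W(ρⱼ, ρ̄ⱼ)²` is realized by the transport map `Tⱼ` pushing `νⱼ`
to `μⱼ`. -/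
theorem stmt14_general (d : ℕ)
    (K : EuclideanSpace ℝ (Fin d) → ℝ) (CK : ℝ)
    (hK2 : ContDiff ℝ 2 K)
    (hHess : ∀ z, ‖iteratedFDeriv ℝ 2 K z‖ ≤ CK)
    (μ₁ μ₂ ν₁ ν₂ : Measure (EuclideanSpace ℝ (Fin d)))
    [IsProbabilityMeasure ν₁] [IsProbabilityMeasure ν₂]
    (hμ₁m2 : Integrable (fun x => ‖x‖ ^ 2) μ₁) (hμ₂m2 : Integrable (fun x => ‖x‖ ^ 2) μ₂)
    (hν₁m2 : Integrable (fun x => ‖x‖ ^ 2) ν₁) (hν₂m2 : Integrable (fun x => ‖x‖ ^ 2) ν₂)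
    (T₁ T₂ : EuclideanSpace ℝ (Fin d) → EuclideanSpace ℝ (Fin d))
    (hT₁m : Measurable T₁) (hT₂m : Measurable T₂)
    (hpush₁ : ν₁.map T₁ = μ₁) (hpush₂ : ν₂.map T₂ = μ₂) :
    |(∫ x, ∫ y, K (x - y) ∂μ₂ ∂μ₁) - (∫ x, ∫ y, K (x - y) ∂ν₂ ∂μ₁)
        - (∫ x, ∫ y, K (x - y) ∂μ₂ ∂ν₁) + ∫ x, ∫ y, K (x - y) ∂ν₂ ∂ν₁| ≤
      CK / 2 * ((∫ x, ‖T₁ x - x‖ ^ 2 ∂ν₁) + ∫ x, ‖T₂ x - x‖ ^ 2 ∂ν₂) := by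
  subst hpush₁ hpush₂
  have hCK : 0 ≤ CK := (norm_nonneg _).trans (hHess 0)
  have hK : Differentiable ℝ K := hK2.differentiable two_ne_zero
  have hK' := norm_fderiv_sub_le_of_norm_iteratedFDeriv_two_le hK2 hHess
  obtain ⟨A, hA⟩ := exists_abs_le_mul_one_add_sq hK hK'
  have hT₁2 : Integrable (fun x => ‖T₁ x‖ ^ 2) ν₁ := hμ₁m2.comp_aemeasurable hT₁m.aemeasurable
  have hT₂2 : Integrable (fun x => ‖T₂ x‖ ^ 2) ν₂ := hμ₂m2.comp_aemeasurable hT₂m.aemeasurable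
  rw [integral_integral_second_difference_map_map hT₁m hT₂m hν₁m2 hν₂m2 hT₁2 hT₂2
    hK2.continuous hA]
  exact abs_integral_second_difference_le hCK hK hK' hT₁m hT₂m hν₁m2 hν₂m2 hT₁2 hT₂2

/-- Bound on the cross interaction term:
`|∬ (ρ₁−ρ̄₁)(x)(ρ₂−ρ̄₂)(y) K(x−y) dx dy| ≤ (C_K/2)(W(ρ₁,ρ̄₁)² + W(ρ₂,ρ̄₂)²)`,
with `ρ_j = μ_j`, `ρ̄_j = ν_j`, and the squared Wasserstein distances realized by
transport maps `T_j` pushing `ν_j` forward to `μ_j`. -/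
theorem stmt14 (d : ℕ) (hd : 0 < d)
    (K : EuclideanSpace ℝ (Fin d) → ℝ) (CK : ℝ)
    (hK2 : ContDiff ℝ 2 K)
    (hHess : ∀ z, ‖iteratedFDeriv ℝ 2 K z‖ ≤ CK)
    (μ₁ μ₂ ν₁ ν₂ : Measure (EuclideanSpace ℝ (Fin d)))
    [IsProbabilityMeasure μ₁] [IsProbabilityMeasure μ₂]
    [IsProbabilityMeasure ν₁] [IsProbabilityMeasure ν₂]
    (hν₁ac : ν₁ ≪ volume) (hν₂ac : ν₂ ≪ volume)
    (hμ₁m2 : Integrable (fun x => ‖x‖ ^ 2) μ₁) (hμ₂m2 : Integrable (fun x => ‖x‖ ^ 2) μ₂)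
    (hν₁m2 : Integrable (fun x => ‖x‖ ^ 2) ν₁) (hν₂m2 : Integrable (fun x => ‖x‖ ^ 2) ν₂)
    (T₁ T₂ : EuclideanSpace ℝ (Fin d) → EuclideanSpace ℝ (Fin d))
    (hT₁m : Measurable T₁) (hT₂m : Measurable T₂)
    (hpush₁ : ν₁.map T₁ = μ₁) (hpush₂ : ν₂.map T₂ = μ₂) :
    |(∫ x, ∫ y, K (x - y) ∂μ₂ ∂μ₁) - (∫ x, ∫ y, K (x - y) ∂ν₂ ∂μ₁)
        - (∫ x, ∫ y, K (x - y) ∂μ₂ ∂ν₁) + ∫ x, ∫ y, K (x - y) ∂ν₂ ∂ν₁| ≤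
      CK / 2 * ((∫ x, ‖T₁ x - x‖ ^ 2 ∂ν₁) + ∫ x, ‖T₂ x - x‖ ^ 2 ∂ν₂) :=
  stmt14_general d K CK hK2 hHess μ₁ μ₂ ν₁ ν₂ hμ₁m2 hμ₂m2 hν₁m2 hν₂m2 T₁ T₂ hT₁m hT₂m hpush₁ hpush₂
end

section
/- Let F: [0,∞) → [0,∞) be C² convex with F(0) = F'(0) = 0 and m r^β ≤ F''(r) ≤ M r^β for 0 ≤ r ≤ r₀ with β ≥ 0 (and F'' positive on (0,∞)). Then for all 0 ≤ r < r̄ (with r̄ ≤ r₀) the Bregman divergence satisfies d_F(r|r̄) ≥ (m / (M 2^{β+2})) F''(r̄)(r̄ − r)², where d_F(r|r̄) = F(r) − F(r̄) − F'(r̄)(r − r̄). -/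
private lemma aux_mvt (f f' : ℝ → ℝ) (a b C : ℝ) (ha : 0 ≤ a) (hab : a ≤ b)
    (hd : ∀ x ≥ (0:ℝ), HasDerivAt f (f' x) x)
    (hge : ∀ x, a < x → x < b → C ≤ f' x) : C * (b - a) ≤ f b - f a := by
  apply Convex.mul_sub_le_image_sub_of_le_deriv (convex_Icc a b)
    (fun x hx => ((hd x (le_trans ha hx.1)).continuousAt).continuousWithinAt)
    (fun x hx => by
      rw [interior_Icc] at hx
      exact ((hd x (le_trans ha hx.1.le)).differentiableAt).differentiableWithinAt)
    (fun x hx => by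
      rw [interior_Icc] at hx
      rw [(hd x (le_trans ha hx.1.le)).deriv]
      exact hge x hx.1 hx.2)
    a (Set.left_mem_Icc.mpr hab) b (Set.right_mem_Icc.mpr hab) hab

/-- Lower bound on the Bregman divergence near the base point, for nonlinearities with
power-type second derivative: `d_F(r|r̄) ≥ (m/(M 2^{β+2})) F''(r̄)(r̄ − r)²` for
`0 ≤ r < r̄ ≤ r₀`. -/
theorem stmt16 (F F' F'' : ℝ → ℝ) (m M β r₀ : ℝ)
    (hm : 0 < m) (hM : 0 < M) (hβ : 0 ≤ β) (hr₀ : 0 < r₀)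
    (hF0 : F 0 = 0) (hF'0 : F' 0 = 0)
    (hFnn : ∀ r ≥ (0:ℝ), 0 ≤ F r)
    (hFd : ∀ r ≥ (0:ℝ), HasDerivAt F (F' r) r)
    (hF'd : ∀ r ≥ (0:ℝ), HasDerivAt F' (F'' r) r)
    (hF''pos : ∀ r > (0:ℝ), 0 < F'' r)
    (hlow : ∀ r ∈ Set.Icc (0:ℝ) r₀, m * r ^ β ≤ F'' r)
    (hup : ∀ r ∈ Set.Icc (0:ℝ) r₀, F'' r ≤ M * r ^ β)
    (r rb : ℝ) (hr0 : 0 ≤ r) (hrrb : r < rb) (hrb : rb ≤ r₀) :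
    m / (M * 2 ^ (β + 2)) * F'' rb * (rb - r) ^ 2 ≤
      F r - F rb - F' rb * (r - rb) := by
  have hrbpos : 0 < rb := lt_of_le_of_lt hr0 hrrb
  set mid := (r + rb) / 2 with hmid
  have hmidpos : 0 < mid := by simp only [hmid]; linarith
  have hrmid : r < mid := by simp only [hmid]; linarith
  have hmidrb : mid < rb := by simp only [hmid]; linarith
  have hrb2mid : rb / 2 ≤ mid := by simp only [hmid]; linarith
  -- monotonicity of F'
  have hmono : ∀ a b : ℝ, 0 ≤ a → a ≤ b → F' a ≤ F' b := by
    intro a b ha hab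
    have h := aux_mvt F' F'' a b 0 ha hab hF'd
      (fun x hx1 _ => (hF''pos x (lt_of_le_of_lt ha hx1)).le)
    linarith
  -- lower bound constant
  set K := m * (rb / 2) ^ β with hK
  have hKpos : 0 < K := mul_pos hm (Real.rpow_pos_of_pos (by linarith) β)
  -- step (a): F' rb - F' mid ≥ K * (rb - mid)
  have ha : K * (rb - mid) ≤ F' rb - F' mid := by
    apply aux_mvt F' F'' mid rb K hmidpos.le hmidrb.le hF'd
    intro x hx1 hx2
    have hx0 : 0 < x := lt_trans hmidpos hx1
    have h1 : m * x ^ β ≤ F'' x := hlow x ⟨hx0.le, by linarith⟩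
    have h2 : (rb / 2) ^ β ≤ x ^ β :=
      Real.rpow_le_rpow (by linarith) (by linarith) hβ
    calc K ≤ m * x ^ β := mul_le_mul_of_nonneg_left h2 hm.le
    _ ≤ F'' x := h1
  -- G x := F' rb * x - F x
  set G : ℝ → ℝ := fun x => F' rb * x - F x with hG
  have hGd : ∀ x ≥ (0:ℝ), HasDerivAt G (F' rb - F' x) x := by
    intro x hx
    have h1 : HasDerivAt (fun y : ℝ => F' rb * y) (F' rb) x := by
      simpa using (hasDerivAt_id x).const_mul (F' rb)
    exact h1.sub (hFd x hx)
  -- step (b): G rb - G mid ≥ 0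
  have hb : 0 ≤ G rb - G mid := by
    have h := aux_mvt G (fun x => F' rb - F' x) mid rb 0 hmidpos.le hmidrb.le hGd
      (fun x hx1 hx2 => by
        have hx0 : 0 < x := lt_trans hmidpos hx1
        show (0:ℝ) ≤ F' rb - F' x
        linarith [hmono x rb hx0.le (le_of_lt hx2)])
    linarith
  -- step (c): G mid - G r ≥ (F' rb - F' mid) * (mid - r)
  have hc : (F' rb - F' mid) * (mid - r) ≤ G mid - G r := by
    apply aux_mvt G (fun x => F' rb - F' x) r mid (F' rb - F' mid) hr0 hrmid.le hGd
    intro x hx1 hx2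
    have hx0 : 0 < x := lt_of_le_of_lt hr0 hx1
    linarith [hmono x mid hx0.le hx2.le]
  -- combine
  have hd : K * (rb - mid) * (mid - r) ≤ F r - F rb - F' rb * (r - rb) := by
    have h1 : K * (rb - mid) * (mid - r) ≤ (F' rb - F' mid) * (mid - r) :=
      mul_le_mul_of_nonneg_right ha (by linarith)
    have h2 : G rb - G r = F r - F rb - F' rb * (r - rb) := by
      simp only [hG]; ring
    linarith
  -- constant comparison
  have hFrb : F'' rb ≤ M * rb ^ β := hup rb ⟨hrbpos.le, hrb⟩
  have h2β : (0:ℝ) < 2 ^ β := Real.rpow_pos_of_pos (by norm_num) β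
  have hpow : (2:ℝ) ^ (β + 2) = 2 ^ β * 4 := by
    rw [Real.rpow_add (by norm_num : (0:ℝ) < 2)]
    norm_num
  have hKeq : K = m * rb ^ β / 2 ^ β := by
    rw [hK, Real.div_rpow hrbpos.le (by norm_num : (0:ℝ) ≤ 2)]
    ring
  have hconst : m / (M * 2 ^ (β + 2)) * F'' rb ≤ K / 4 := by
    rw [hpow, hKeq, div_mul_eq_mul_div, div_div,
      div_le_div_iff₀ (by positivity) (by positivity)]
    nlinarith [mul_le_mul_of_nonneg_left hFrb hm.le, h2β.le,
      mul_le_mul_of_nonneg_right (mul_le_mul_of_nonneg_left hFrb hm.le) h2β.le]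
  have hsq : K * (rb - mid) * (mid - r) = K / 4 * (rb - r) ^ 2 := by
    have hmr : rb - mid = (rb - r) / 2 := by simp only [hmid]; ring
    have hmr2 : mid - r = (rb - r) / 2 := by simp only [hmid]; ring
    rw [hmr, hmr2]; ring
  have hfin : m / (M * 2 ^ (β + 2)) * F'' rb * (rb - r) ^ 2 ≤ K / 4 * (rb - r) ^ 2 :=
    mul_le_mul_of_nonneg_right hconst (by positivity)
  linarith [hsq ▸ hd]
end

section
/- Let ρ, ρ̄ be probability densities on ℝ^d, let F: [0,∞) → [0,∞) be C² convex, and suppose there are constants A, c > 0 such that ∫_{{ρ̄ > 0}} 1/F''(ρ̄) dx ≤ A and d_F(ρ(x)|ρ̄(x)) ≥ c F''(ρ̄(x))(ρ̄(x) − ρ(x))² wherever ρ(x) < ρ̄(x). Then ‖ρ − ρ̄‖²_{L¹(ℝ^d)} ≤ (4A/c) ∫ d_F(ρ|ρ̄) dx. -/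
open MeasureTheory

/-!
Since `ρ` and `σ` have the same mass, `‖ρ - σ‖_{L¹} = 2 ∫_S (σ - ρ)` with `S = {ρ < σ}`.
Cauchy–Schwarz with weights `F''(σ)⁻¹` and `F''(σ)` on `S` bounds the square of this integral by
`(∫_S F''(σ)⁻¹) (∫_S F''(σ) (σ - ρ)²) ≤ A · c⁻¹ ∫_S d_F(ρ|σ)`, and `∫_S d_F ≤ ∫ d_F` because the
Bregman divergence of a convex function is nonnegative.
-/
theorem ConvexOn.mul_sub_le_sub_of_hasDerivAt {S : Set ℝ} {f : ℝ → ℝ} {f' a b : ℝ}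
    (hf : ConvexOn ℝ S f) (ha : a ∈ S) (hb : b ∈ S) (hb' : HasDerivAt f f' b) :
    f' * (a - b) ≤ f a - f b := by
  rcases lt_trichotomy a b with hab | rfl | hab
  · have := hf.slope_le_of_hasDerivAt ha hb hab hb'
    rw [slope_def_field, div_le_iff₀ (sub_pos.2 hab)] at this
    linarith
  · simp
  · have := hf.le_slope_of_hasDerivAt hb ha hab hb'
    rwa [slope_def_field, le_div_iff₀ (sub_pos.2 hab)] at this

theorem bregman_nonneg_of_hasDerivAt2 {F F' F'' : ℝ → ℝ}
    (hF : ∀ r ≥ (0:ℝ), HasDerivAt F (F' r) r) (hF' : ∀ r ≥ (0:ℝ), HasDerivAt F' (F'' r) r)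
    (hF'' : ∀ r ≥ (0:ℝ), 0 ≤ F'' r) {a b : ℝ} (ha : 0 ≤ a) (hb : 0 ≤ b) :
    0 ≤ F a - F b - F' b * (a - b) := by
  have hconv : ConvexOn ℝ (Set.Ici 0) F :=
    convexOn_of_hasDerivWithinAt2_nonneg (convex_Ici 0)
      (fun x hx => (hF x hx).continuousAt.continuousWithinAt)
      (fun x hx => (hF x (interior_subset hx)).hasDerivWithinAt)
      (fun x hx => (hF' x (interior_subset hx)).hasDerivWithinAt)
      (fun x hx => hF'' x (interior_subset hx))
  linarith [hconv.mul_sub_le_sub_of_hasDerivAt (Set.mem_Ici.2 ha) (Set.mem_Ici.2 hb) (hF b hb)]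

theorem integral_abs_sub_eq_two_mul_setIntegral_lt {α : Type*} [MeasurableSpace α]
    {μ : Measure α} {f g : α → ℝ} (hfm : Measurable f) (hgm : Measurable g)
    (hf : Integrable f μ) (hg : Integrable g μ) (hfg : ∫ x, f x ∂μ = ∫ x, g x ∂μ) :
    ∫ x, |f x - g x| ∂μ = 2 * ∫ x in {x | f x < g x}, (g x - f x) ∂μ := by
  set S := {x | f x < g x}
  have hS : MeasurableSet S := measurableSet_lt hfm hgm
  have habs : (fun x => |f x - g x|) =
      fun x => 2 * S.indicator (fun x => g x - f x) x + (f x - g x) := by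
    ext x
    by_cases hx : f x < g x
    · rw [Set.indicator_of_mem (show x ∈ S from hx), abs_of_neg (sub_neg.2 hx)]
      ring
    · rw [Set.indicator_of_notMem (show x ∉ S from hx),
        abs_of_nonneg (sub_nonneg.2 (not_lt.1 hx))]
      ring
  have hind : Integrable (fun x => 2 * S.indicator (fun x => g x - f x) x) μ :=
    ((hg.sub hf).indicator hS).const_mul 2
  rw [habs, integral_add (g := fun x => f x - g x) hind (hf.sub hg),
    integral_const_mul, integral_indicator hS, integral_sub hf hg, hfg, sub_self, add_zero]

theorem sq_integral_le_integral_inv_mul_integral_mul_sq {α : Type*} [MeasurableSpace α]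
    {μ : Measure α} {w h : α → ℝ} (hw : ∀ᵐ x ∂μ, 0 < w x) (hh : ∀ᵐ x ∂μ, 0 ≤ h x)
    (hwi : Integrable (fun x => (w x)⁻¹) μ) (hwh : Integrable (fun x => w x * h x ^ 2) μ) :
    (∫ x, h x ∂μ) ^ 2 ≤ (∫ x, (w x)⁻¹ ∂μ) * ∫ x, w x * h x ^ 2 ∂μ := by
  set f := fun x => √((w x)⁻¹)
  set g := fun x => √(w x * h x ^ 2)
  have hf2 : (fun x => f x ^ 2) =ᵐ[μ] fun x => (w x)⁻¹ := by
    filter_upwards [hw] with x hx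
    simp only [f, Real.sq_sqrt (inv_nonneg.2 hx.le)]
  have hg2 : (fun x => g x ^ 2) =ᵐ[μ] fun x => w x * h x ^ 2 := by
    filter_upwards [hw] with x hx
    simp only [g, Real.sq_sqrt (mul_nonneg hx.le (sq_nonneg _))]
  have hfL2 : MemLp f (ENNReal.ofReal 2) μ := by
    rw [ENNReal.ofReal_ofNat, memLp_two_iff_integrable_sq
      (Real.continuous_sqrt.comp_aestronglyMeasurable hwi.aestronglyMeasurable)]
    exact hwi.congr hf2.symm
  have hgL2 : MemLp g (ENNReal.ofReal 2) μ := by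
    rw [ENNReal.ofReal_ofNat, memLp_two_iff_integrable_sq
      (Real.continuous_sqrt.comp_aestronglyMeasurable hwh.aestronglyMeasurable)]
    exact hwh.congr hg2.symm
  have hfg : (fun x => f x * g x) =ᵐ[μ] h := by
    filter_upwards [hw, hh] with x hx hhx
    rw [← Real.sqrt_mul (inv_nonneg.2 hx.le), inv_mul_cancel_left₀ hx.ne', Real.sqrt_sq hhx]
  have holder := integral_mul_le_Lp_mul_Lq_of_nonneg Real.HolderConjugate.two_two
    (ae_of_all _ fun x => Real.sqrt_nonneg _) (ae_of_all _ fun x => Real.sqrt_nonneg _) hfL2 hgL2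
  simp only [Real.rpow_two] at holder
  rw [integral_congr_ae hfg, integral_congr_ae hf2, integral_congr_ae hg2,
    ← Real.sqrt_eq_rpow, ← Real.sqrt_eq_rpow] at holder
  have hwi0 : 0 ≤ ∫ x, (w x)⁻¹ ∂μ :=
    integral_nonneg_of_ae (hw.mono fun x hx => inv_nonneg.2 hx.le)
  have hwh0 : 0 ≤ ∫ x, w x * h x ^ 2 ∂μ :=
    integral_nonneg_of_ae (hw.mono fun x hx => mul_nonneg hx.le (sq_nonneg _))
  calc (∫ x, h x ∂μ) ^ 2
      ≤ (√(∫ x, (w x)⁻¹ ∂μ) * √(∫ x, w x * h x ^ 2 ∂μ)) ^ 2 :=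
        pow_le_pow_left₀ (integral_nonneg_of_ae hh) holder 2
    _ = _ := by rw [mul_pow, Real.sq_sqrt hwi0, Real.sq_sqrt hwh0]

theorem sq_integral_abs_sub_le_of_weighted_bound {α : Type*} [MeasurableSpace α]
    {μ : Measure α} {f g w D : α → ℝ} {A c : ℝ} (hc : 0 < c)
    (hfm : Measurable f) (hgm : Measurable g) (hf : Integrable f μ) (hg : Integrable g μ)
    (hfg : ∫ x, f x ∂μ = ∫ x, g x ∂μ) (hw : ∀ x, f x < g x → 0 < w x)
    (hwi : IntegrableOn (fun x => (w x)⁻¹) {x | f x < g x} μ)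
    (hwA : ∫ x in {x | f x < g x}, (w x)⁻¹ ∂μ ≤ A)
    (hD : ∀ x, f x < g x → c * w x * (g x - f x) ^ 2 ≤ D x) (hD0 : ∀ x, 0 ≤ D x)
    (hDi : Integrable D μ) :
    (∫ x, |f x - g x| ∂μ) ^ 2 ≤ 4 * A / c * ∫ x, D x ∂μ := by
  set S := {x | f x < g x}
  have hS : MeasurableSet S := measurableSet_lt hfm hgm
  have hbound : ∀ x ∈ S, w x * (g x - f x) ^ 2 ≤ c⁻¹ * D x := fun x hx => by
    rw [inv_mul_eq_div, le_div_iff₀ hc]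
    linarith [hD x hx]
  have henergy_int : IntegrableOn (fun x => w x * (g x - f x) ^ 2) S μ := by
    refine Integrable.mono' (hDi.const_mul c⁻¹).integrableOn ?_ ?_
    · -- `w` is a.e.-measurable on `S` as the inverse of the integrable `w⁻¹`.
      have : AEMeasurable (fun x => (w x)⁻¹⁻¹ * (g x - f x) ^ 2) (μ.restrict S) :=
        hwi.aemeasurable.inv.mul ((hgm.sub hfm).pow_const 2).aemeasurable
      simpa only [inv_inv] using this.aestronglyMeasurable
    · refine (ae_restrict_iff' hS).2 (ae_of_all _ fun x hx => ?_)
      rw [Real.norm_of_nonneg (mul_nonneg (hw x hx).le (sq_nonneg _))]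
      exact hbound x hx
  have henergy : ∫ x in S, w x * (g x - f x) ^ 2 ∂μ ≤ c⁻¹ * ∫ x, D x ∂μ :=
    calc ∫ x in S, w x * (g x - f x) ^ 2 ∂μ
        ≤ ∫ x in S, c⁻¹ * D x ∂μ :=
          setIntegral_mono_on henergy_int (hDi.const_mul c⁻¹).integrableOn hS hbound
      _ = c⁻¹ * ∫ x in S, D x ∂μ := integral_const_mul _ _
      _ ≤ c⁻¹ * ∫ x, D x ∂μ := mul_le_mul_of_nonneg_left
          (setIntegral_le_integral hDi (ae_of_all _ hD0)) (inv_nonneg.2 hc.le)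
  have hCS := sq_integral_le_integral_inv_mul_integral_mul_sq (w := w) (h := fun x => g x - f x)
    ((ae_restrict_iff' hS).2 (ae_of_all _ hw))
    ((ae_restrict_iff' hS).2 (ae_of_all _ fun x hx => sub_nonneg.2 (le_of_lt hx)))
    hwi henergy_int
  have hA : 0 ≤ A := (setIntegral_nonneg hS fun x hx => inv_nonneg.2 (hw x hx).le).trans hwA
  rw [integral_abs_sub_eq_two_mul_setIntegral_lt hfm hgm hf hg hfg]
  calc (2 * ∫ x in S, (g x - f x) ∂μ) ^ 2
      = 4 * (∫ x in S, (g x - f x) ∂μ) ^ 2 := by ring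
    _ ≤ 4 * ((∫ x in S, (w x)⁻¹ ∂μ) * ∫ x in S, w x * (g x - f x) ^ 2 ∂μ) := by gcongr
    _ ≤ 4 * (A * (c⁻¹ * ∫ x, D x ∂μ)) := by
        gcongr
        exact setIntegral_nonneg hS fun x hx => mul_nonneg (hw x hx).le (sq_nonneg _)
    _ = 4 * A / c * ∫ x, D x ∂μ := by ring

theorem stmt17_general (d : ℕ) (F F' F'' : ℝ → ℝ) (A c : ℝ)
    (hc : 0 < c)
    (hFd : ∀ r ≥ (0:ℝ), HasDerivAt F (F' r) r)
    (hF'd : ∀ r ≥ (0:ℝ), HasDerivAt F' (F'' r) r)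
    (hF''nn : ∀ r ≥ (0:ℝ), 0 ≤ F'' r)
    (hF''pos : ∀ r > (0:ℝ), 0 < F'' r)
    (ρ σ : EuclideanSpace ℝ (Fin d) → ℝ)
    (hρm : Measurable ρ) (hσm : Measurable σ)
    (hρnn : ∀ x, 0 ≤ ρ x) (hσnn : ∀ x, 0 ≤ σ x)
    (hρi : Integrable ρ) (hσi : Integrable σ)
    (hρ1 : (∫ x, ρ x) = 1) (hσ1 : (∫ x, σ x) = 1)
    (hAi : IntegrableOn (fun x => (F'' (σ x))⁻¹) {x | 0 < σ x})
    (hAbd : (∫ x in {x | 0 < σ x}, (F'' (σ x))⁻¹) ≤ A)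
    (hdF : ∀ x, ρ x < σ x →
      c * F'' (σ x) * (σ x - ρ x) ^ 2 ≤
        F (ρ x) - F (σ x) - F' (σ x) * (ρ x - σ x))
    (hdFi : Integrable (fun x => F (ρ x) - F (σ x) - F' (σ x) * (ρ x - σ x))) :
    (∫ x, |ρ x - σ x|) ^ 2 ≤
      4 * A / c * ∫ x, (F (ρ x) - F (σ x) - F' (σ x) * (ρ x - σ x)) := by
  have hSpos : {x | ρ x < σ x} ⊆ {x | 0 < σ x} := fun x hx => (hρnn x).trans_lt hx
  have hweight : ∫ x in {x | ρ x < σ x}, (F'' (σ x))⁻¹ ≤ A :=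
    (setIntegral_mono_set hAi (ae_of_all _ fun x => inv_nonneg.2 (hF''nn _ (hσnn x)))
      hSpos.eventuallyLE).trans hAbd
  exact sq_integral_abs_sub_le_of_weighted_bound hc hρm hσm hρi hσi (hρ1.trans hσ1.symm)
    (fun x hx => hF''pos _ (hSpos hx)) (hAi.mono_set hSpos) hweight hdF
    (fun x => bregman_nonneg_of_hasDerivAt2 hFd hF'd hF''nn (hρnn x) (hσnn x)) hdFi

/-- Csiszár–Kullback-type inequality: if `∫_{ρ̄>0} 1/F''(ρ̄) ≤ A` and the Bregman
divergence dominates `c F''(ρ̄)(ρ̄ − ρ)²` wherever `ρ < ρ̄`, then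
`‖ρ − ρ̄‖²_{L¹} ≤ (4A/c) ∫ d_F(ρ|ρ̄)`. -/
theorem stmt17 (d : ℕ) (hd : 0 < d) (F F' F'' : ℝ → ℝ) (A c : ℝ)
    (hA : 0 < A) (hc : 0 < c)
    (hFd : ∀ r ≥ (0:ℝ), HasDerivAt F (F' r) r)
    (hF'd : ∀ r ≥ (0:ℝ), HasDerivAt F' (F'' r) r)
    (hF''cont : ContinuousOn F'' (Set.Ici (0:ℝ)))
    (hF''nn : ∀ r ≥ (0:ℝ), 0 ≤ F'' r)
    (hF''pos : ∀ r > (0:ℝ), 0 < F'' r)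
    (ρ σ : EuclideanSpace ℝ (Fin d) → ℝ)
    (hρm : Measurable ρ) (hσm : Measurable σ)
    (hρnn : ∀ x, 0 ≤ ρ x) (hσnn : ∀ x, 0 ≤ σ x)
    (hρi : Integrable ρ) (hσi : Integrable σ)
    (hρ1 : (∫ x, ρ x) = 1) (hσ1 : (∫ x, σ x) = 1)
    (hAi : IntegrableOn (fun x => (F'' (σ x))⁻¹) {x | 0 < σ x})
    (hAbd : (∫ x in {x | 0 < σ x}, (F'' (σ x))⁻¹) ≤ A)
    (hdF : ∀ x, ρ x < σ x →
      c * F'' (σ x) * (σ x - ρ x) ^ 2 ≤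
        F (ρ x) - F (σ x) - F' (σ x) * (ρ x - σ x))
    (hdFi : Integrable (fun x => F (ρ x) - F (σ x) - F' (σ x) * (ρ x - σ x))) :
    (∫ x, |ρ x - σ x|) ^ 2 ≤
      4 * A / c * ∫ x, (F (ρ x) - F (σ x) - F' (σ x) * (ρ x - σ x)) :=
  stmt17_general d F F' F'' A c hc hFd hF'd hF''nn hF''pos ρ σ hρm hσm hρnn hσnn hρi hσi hρ1 hσ1 hAi
    hAbd hdF hdFi
end
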